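/- arXiv:2005.11360 — 6 statements merged into one kernel-verified Lean document; each statement's English description precedes it below -/
import Mathlib

section
/- Let H and H' be self-adjoint non-negative operators with purely discrete spectra on separable Hilbert spaces H and H' respectively, with associated quadratic forms h and h'. Suppose Φ : dom(h) → dom(h') is a linear map and δ_1, δ_2 > 0 are constants such that for all u ∈ dom(h): ‖u‖² ≤ ‖Φu‖² + δ_1(‖u‖² + h⟨u,u⟩) and h'⟨Φu,Φu⟩ ≤ h⟨u,u⟩ + δ_2(‖u‖² + h⟨u,u⟩). Then for each j ∈ ℕ with 1 − (1 + λ_j(H))δ_1 > 0, one has λ_j(H') ≤ λ_j(H) + (λ_j(H)(1+λ_j(H))δ_1 + (1+λ_j(H))δ_2)/(1 − (1+λ_j(H))δ_1), where λ_j denotes the j-th eigenvalue counted with multiplicity in ascending order. -/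
set_option maxHeartbeats 1000000


/-- Lemma 2.1 of [EP05]: abstract comparison of eigenvalues of two
self-adjoint non-negative operators with purely discrete spectra acting in different
Hilbert spaces.  Here `E`, `E'` stand for the form domains `dom(h)`, `dom(h')` equipped
with the inner products of the ambient Hilbert spaces `H`, `H'`; the eigenvalue sequences
`lam j = λ_{j+1}(𝓗)`, `lam' j = λ_{j+1}(𝓗')` (ascending, with multiplicity) are encoded
via their Courant–Fischer min-max characterizations, which hold for non-negative
self-adjoint operators with purely discrete spectrum. -/
theorem eigenvalue_comparison_EP05
    {E E' : Type*} [NormedAddCommGroup E] [InnerProductSpace ℝ E]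
    [NormedAddCommGroup E'] [InnerProductSpace ℝ E']
    (h : E → ℝ) (h' : E' → ℝ) (hpos : ∀ u, 0 ≤ h u) (hpos' : ∀ u, 0 ≤ h' u)
    (Φ : E →ₗ[ℝ] E') (δ1 δ2 : ℝ) (hδ1 : 0 < δ1) (hδ2 : 0 < δ2)
    (lam lam' : ℕ → ℝ)
    -- min-max characterization of the eigenvalues of 𝓗 (upper bound part):
    (hminmaxH : ∀ j : ℕ, ∃ V : Submodule ℝ E, Module.finrank ℝ V = j + 1 ∧
      ∀ u ∈ V, h u ≤ lam j * ‖u‖ ^ 2)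
    -- min-max characterization of the eigenvalues of 𝓗' (lower bound part):
    (hminmaxH' : ∀ j : ℕ, ∀ V' : Submodule ℝ E', Module.finrank ℝ V' = j + 1 →
      ∃ u ∈ V', u ≠ 0 ∧ lam' j * ‖u‖ ^ 2 ≤ h' u)
    -- the two hypotheses on the linear map Φ : dom(h) → dom(h'):
    (hest1 : ∀ u, ‖u‖ ^ 2 ≤ ‖Φ u‖ ^ 2 + δ1 * (‖u‖ ^ 2 + h u))
    (hest2 : ∀ u, h' (Φ u) ≤ h u + δ2 * (‖u‖ ^ 2 + h u))
    (j : ℕ) (hden : 0 < 1 - (1 + lam j) * δ1) :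
    lam' j ≤ lam j +
      (lam j * (1 + lam j) * δ1 + (1 + lam j) * δ2) / (1 - (1 + lam j) * δ1) := by
  obtain ⟨V, hVrank, hVbound⟩ := hminmaxH j
  set lj := lam j with hlj
  haveI : FiniteDimensional ℝ V := by
    apply FiniteDimensional.of_finrank_pos; omega
  set f := Φ.domRestrict V with hf
  have hinj : Function.Injective f := by
    rw [← LinearMap.ker_eq_bot]
    rw [LinearMap.ker_eq_bot']
    rintro ⟨u, hu⟩ h0
    have h0' : Φ u = 0 := h0
    rw [Submodule.mk_eq_zero]
    by_contra hne
    have hs : 0 < ‖u‖ ^ 2 := pow_pos (norm_pos_iff.mpr hne) 2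
    have h1 := hest1 u
    rw [h0'] at h1
    simp only [norm_zero] at h1
    have h2 := hVbound u hu
    nlinarith [mul_pos hden hs, hpos u]
  have hrange : Module.finrank ℝ (LinearMap.range f) = j + 1 := by
    rw [LinearMap.finrank_range_of_inj hinj, hVrank]
  obtain ⟨u', hu'mem, hu'ne, hu'low⟩ := hminmaxH' j _ hrange
  obtain ⟨⟨u, huV⟩, rfl⟩ := hu'mem
  have hfu : f ⟨u, huV⟩ = Φ u := rfl
  rw [hfu] at hu'ne hu'low
  have hune : u ≠ 0 := by
    intro h0; apply hu'ne; rw [h0]; simp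
  have hus : 0 < ‖u‖ ^ 2 := pow_pos (norm_pos_iff.mpr hune) 2
  have hhu : h u ≤ lj * ‖u‖ ^ 2 := hVbound u huV
  have hl0 : 0 ≤ lj := by nlinarith [hpos u]
  -- lower bound on ‖Φ u‖²
  have hΦlow : (1 - (1 + lj) * δ1) * ‖u‖ ^ 2 ≤ ‖Φ u‖ ^ 2 := by
    have := hest1 u
    nlinarith
  have hΦup : h' (Φ u) ≤ (lj + (1 + lj) * δ2) * ‖u‖ ^ 2 := by
    have := hest2 u
    nlinarith
  have key : lam' j * ((1 - (1 + lj) * δ1) * ‖u‖ ^ 2) ≤ (lj + (1 + lj) * δ2) * ‖u‖ ^ 2 := by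
    rcases le_or_gt (lam' j) 0 with hc | hc
    · have h0' : 0 ≤ (lj + (1 + lj) * δ2) * ‖u‖ ^ 2 := by positivity
      nlinarith [mul_nonneg (neg_nonneg.mpr hc) (mul_pos hden hus).le]
    · calc lam' j * ((1 - (1 + lj) * δ1) * ‖u‖ ^ 2)
          ≤ lam' j * ‖Φ u‖ ^ 2 := by
            apply mul_le_mul_of_nonneg_left hΦlow hc.le
        _ ≤ h' (Φ u) := hu'low
        _ ≤ _ := hΦup
  have key2 : lam' j * (1 - (1 + lj) * δ1) ≤ lj + (1 + lj) * δ2 := by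
    have key' : (lam' j * (1 - (1 + lj) * δ1)) * ‖u‖ ^ 2 ≤ (lj + (1 + lj) * δ2) * ‖u‖ ^ 2 := by
      rw [mul_assoc]; exact key
    exact le_of_mul_le_mul_right key' hus
  have hrhs : lj + (lj * (1 + lj) * δ1 + (1 + lj) * δ2) / (1 - (1 + lj) * δ1)
      = (lj + (1 + lj) * δ2) / (1 - (1 + lj) * δ1) := by
    field_simp
    ring
  rw [hrhs, le_div_iff₀ hden]
  exact key2
end

section
/- Let m ∈ ℕ, D = Π_{k=1}^m [a_k, b_k] with a_k < b_k for all k, and F : D → ℝ^m a continuous function each of whose components F_k is monotonically increasing in each of its m arguments. Define F_k^- = F_k(b_1,...,b_{k−1}, a_k, b_{k+1},...,b_m) and F_k^+ = F_k(a_1,...,a_{k−1}, b_k, a_{k+1},...,a_m), and suppose F_k^- < F_k^+ for every k. Then for any F* ∈ Π_{k=1}^m [F_k^-, F_k^+] there exists x ∈ D with F(x) = F*. -/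
/-!
For `G = F - F*`, monotonicity gives `G k ≤ 0` on the face `x k = a k` and `G k ≥ 0` on the face
`x k = b k` of the box, so this is an instance of the Poincaré–Miranda theorem. A small linear
perturbation makes these sign conditions strict. Then label each point of a fine grid by the
first index `k` with `G k ≥ 0`, or by `m` if there is none: the strict sign conditions make this a
Sperner labelling of the Kuhn triangulation of the box. Modulo 2, the fully labelled simplices are
as many as the doors (facets carrying the labels `0, …, m - 1`), and walking through doors pairs
up all doors except those on the top face, which are the fully labelled simplices of the top face.
By induction on the dimension their number is odd, so a fully labelled simplex exists. By uniform
continuity its vertex labelled `m` is an approximate zero of `G`, and the image of the compact box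
is closed.
-/

open Finset

theorem Finset.card_modEq_card_filter_apply_eq_of_involutive {α : Type*} [DecidableEq α]
    (s : Finset α) (f : α → α) (hs : ∀ x ∈ s, f x ∈ s) (hf : ∀ x ∈ s, f (f x) = x) :
    #s ≡ #(s.filter fun x => f x = x) [MOD 2] := by
  let g : Function.End s := fun x => ⟨f x, hs x x.2⟩
  have hg : g ^ 2 ^ 1 = 1 := funext fun x => Subtype.ext (hf x x.2)
  convert Equiv.Perm.card_fixedPoints_modEq (p := 2) hg using 1
  · simp
  · rw [← Fintype.card_coe]
    exact Fintype.card_congr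
      { toFun x := ⟨⟨x, (mem_filter.1 x.2).1⟩, Subtype.ext (mem_filter.1 x.2).2⟩
        invFun x := ⟨x.1, mem_filter.2 ⟨x.1.2, congrArg Subtype.val x.2⟩⟩ }

theorem card_filter_image_erase_eq_erase {α : Type*} [Fintype α] [DecidableEq α] (f : α → α)
    (c : α) : (#(univ.filter fun a => (univ.erase a).image f = univ.erase c) : ZMod 2) =
      if Function.Surjective f then 1 else 0 := by
  set D := univ.filter fun a => (univ.erase a).image f = univ.erase c
  by_cases hf : Function.Injective f
  · have hsurj := Finite.surjective_of_injective hf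
    obtain ⟨a₀, rfl⟩ := hsurj c
    have : D = {a₀} := by
      ext a
      simp [D, image_erase hf, image_univ_of_surjective hsurj, erase_inj _ (mem_univ _), hf.eq_iff]
    simp [this, hsurj]
  · obtain ⟨i, j, hfij, hij⟩ : ∃ i j, f i = f j ∧ i ≠ j := by
      simpa [Function.Injective] using hf
    rw [if_neg fun hs => hf (Finite.injective_iff_surjective.2 hs)]
    have hsub : D ⊆ {i, j} := by
      intro a ha
      rw [mem_filter] at ha
      have hinj : Set.InjOn f (univ.erase a) :=
        injOn_of_card_image_eq (by rw [ha.2, card_erase_of_mem (mem_univ _),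
          card_erase_of_mem (mem_univ _)])
      by_contra hne
      simp only [mem_insert, mem_singleton, not_or] at hne
      exact hij (hinj (by simp [Ne.symm hne.1]) (by simp [Ne.symm hne.2]) hfij)
    have himage : (univ.erase i).image f = (univ.erase j).image f := by
      ext y
      simp only [mem_image, mem_erase, mem_univ, and_true]
      constructor <;> rintro ⟨z, hz, rfl⟩
      · by_cases hzj : z = j
        · exact ⟨i, hij, by rw [hzj, hfij]⟩
        · exact ⟨z, hzj, rfl⟩
      · by_cases hzi : z = i
        · exact ⟨j, hij.symm, by rw [hzi, hfij]⟩
        · exact ⟨z, hzi, rfl⟩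
    by_cases hi : (univ.erase i).image f = univ.erase c
    · have : D = {i, j} := hsub.antisymm (by simp [D, insert_subset_iff, hi, ← himage])
      rw [this, card_pair hij]
      decide
    · have : D = ∅ := by
        refine eq_empty_of_forall_notMem fun a ha => ?_
        have ha' := (mem_filter.1 ha).2
        rcases mem_insert.1 (hsub ha) with rfl | h
        · exact hi ha'
        · rw [mem_singleton.1 h, ← himage] at ha'
          exact hi ha'
      simp [this]

namespace Kuhn

variable {n N : ℕ}

/-- `(p, π)` is the simplex of the Kuhn triangulation of the grid `{0, …, N}ⁿ` with vertices
`p, p + e (π 0), p + e (π 0) + e (π 1), …`. -/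
abbrev Simplex (n N : ℕ) := (Fin n → Fin N) × Equiv.Perm (Fin n)

def vertex (s : Simplex n N) (i : Fin (n + 1)) : Fin n → ℕ :=
  fun k => s.1 k + if (s.2.symm k : ℕ) < i then 1 else 0

lemma base_le_vertex (s : Simplex n N) (i : Fin (n + 1)) (k : Fin n) :
    (s.1 k : ℕ) ≤ vertex s i k :=
  Nat.le_add_right _ _

lemma vertex_le_base_add_one (s : Simplex n N) (i : Fin (n + 1)) (k : Fin n) :
    vertex s i k ≤ s.1 k + 1 := by
  unfold vertex
  split <;> omega

lemma vertex_le_vertex_add_one (s : Simplex n N) (i j : Fin (n + 1)) (k : Fin n) :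
    vertex s i k ≤ vertex s j k + 1 :=
  (vertex_le_base_add_one s i k).trans (Nat.add_le_add_right (base_le_vertex s j k) 1)

lemma vertex_le (s : Simplex n N) (i : Fin (n + 1)) (k : Fin n) : vertex s i k ≤ N :=
  (vertex_le_base_add_one s i k).trans (s.1 k).isLt

/-- Swaps the positions `i - 1` and `i`; only used for `0 < i < n + 1`. -/
def innerSwap (i : Fin (n + 2)) : Equiv.Perm (Fin (n + 1)) :=
  Equiv.swap ⟨i - 1, by omega⟩ ⟨min i n, by omega⟩

/-! Each pivot replaces one vertex of a simplex by its reflection in the opposite facet. -/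

def pivotInner (s : Simplex (n + 1) N) (i : Fin (n + 2)) : Simplex (n + 1) N :=
  (s.1, (innerSwap i).trans s.2)

def pivotFirst (s : Simplex (n + 1) N) (h : (s.1 (s.2 0) : ℕ) + 1 < N) : Simplex (n + 1) N :=
  (Function.update s.1 (s.2 0) ⟨s.1 (s.2 0) + 1, h⟩, (finRotate (n + 1)).trans s.2)

def pivotLast (s : Simplex (n + 1) N) : Simplex (n + 1) N :=
  (Function.update s.1 (s.2 (Fin.last n))
      ⟨s.1 (s.2 (Fin.last n)) - 1, by have := (s.1 (s.2 (Fin.last n))).isLt; omega⟩,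
    (finRotate (n + 1)).symm.trans s.2)

lemma pivotInner_symm_apply (s : Simplex (n + 1) N) (i : Fin (n + 2)) (k : Fin (n + 1)) :
    (pivotInner s i).2.symm k = innerSwap i (s.2.symm k) := by
  simp [pivotInner, innerSwap]

lemma pivotFirst_base_apply (s : Simplex (n + 1) N) (h : (s.1 (s.2 0) : ℕ) + 1 < N)
    (k : Fin (n + 1)) : ((pivotFirst s h).1 k : ℕ) = s.1 k + if k = s.2 0 then 1 else 0 := by
  rcases eq_or_ne k (s.2 0) with rfl | hk <;> simp [pivotFirst, *]

lemma pivotLast_base_apply (s : Simplex (n + 1) N) (k : Fin (n + 1)) :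
    ((pivotLast s).1 k : ℕ) = s.1 k - if k = s.2 (Fin.last n) then 1 else 0 := by
  rcases eq_or_ne k (s.2 (Fin.last n)) with rfl | hk <;> simp [pivotLast, *]

lemma pivotFirst_symm_apply (s : Simplex (n + 1) N) (h : (s.1 (s.2 0) : ℕ) + 1 < N)
    (k : Fin (n + 1)) : (pivotFirst s h).2.symm k = s.2.symm k - 1 := by
  rw [pivotFirst, Equiv.symm_trans_apply, Equiv.symm_apply_eq, finRotate_apply, sub_add_cancel]

lemma pivotLast_symm_apply (s : Simplex (n + 1) N) (k : Fin (n + 1)) :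
    (pivotLast s).2.symm k = s.2.symm k + 1 := by
  rw [pivotLast, Equiv.symm_trans_apply, Equiv.symm_symm, finRotate_apply]

lemma val_innerSwap_lt_iff {i j : Fin (n + 2)} (h0 : i ≠ 0) (hl : i ≠ Fin.last (n + 1))
    (hj : j ≠ i) (r : Fin (n + 1)) : (innerSwap i r : ℕ) < j ↔ (r : ℕ) < j := by
  have h0' : (i : ℕ) ≠ 0 := Fin.val_ne_iff.2 h0
  have hl' : (i : ℕ) ≠ n + 1 := Fin.val_ne_iff.2 hl
  have hj' : (j : ℕ) ≠ i := Fin.val_ne_iff.2 hj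
  unfold innerSwap
  rw [Equiv.swap_apply_def]
  split_ifs <;> simp only [Fin.ext_iff] at * <;> omega

lemma vertex_pivotInner (s : Simplex (n + 1) N) {i j : Fin (n + 2)} (h0 : i ≠ 0)
    (hl : i ≠ Fin.last (n + 1)) (hj : j ≠ i) : vertex (pivotInner s i) j = vertex s j := by
  funext k
  simp only [vertex, pivotInner_symm_apply]
  exact congrArg _ (if_congr (val_innerSwap_lt_iff h0 hl hj _) rfl rfl)

lemma vertex_pivotFirst (s : Simplex (n + 1) N) (h : (s.1 (s.2 0) : ℕ) + 1 < N)
    (j : Fin (n + 1)) : vertex (pivotFirst s h) j.castSucc = vertex s j.succ := by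
  funext k
  simp only [vertex, pivotFirst_base_apply, pivotFirst_symm_apply, Fin.val_castSucc,
    Fin.val_succ]
  rcases eq_or_ne k (s.2 0) with rfl | hk
  · simp [Nat.not_lt.2 (Nat.le_of_lt_succ j.isLt)]
  · have : s.2.symm k ≠ 0 := fun h => hk (by rw [← h, Equiv.apply_symm_apply])
    simp only [hk, Fin.coe_sub_one, this, if_false]
    have : (s.2.symm k : ℕ) ≠ 0 := Fin.val_ne_iff.2 this
    split_ifs <;> omega

lemma vertex_pivotLast (s : Simplex (n + 1) N) (h : 1 ≤ (s.1 (s.2 (Fin.last n)) : ℕ))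
    (j : Fin (n + 1)) : vertex (pivotLast s) j.succ = vertex s j.castSucc := by
  funext k
  simp only [vertex, pivotLast_base_apply, pivotLast_symm_apply, Fin.val_castSucc,
    Fin.val_succ]
  rcases eq_or_ne k (s.2 (Fin.last n)) with rfl | hk
  · simp [Nat.not_lt.2 (Nat.le_of_lt_succ j.isLt)]
    omega
  · have : s.2.symm k ≠ Fin.last n := fun h => hk (by rw [← h, Equiv.apply_symm_apply])
    simp only [hk, Fin.val_add_one, this, if_false]
    split_ifs <;> omega

lemma pivotFirst_perm_last (s : Simplex (n + 1) N) (h : (s.1 (s.2 0) : ℕ) + 1 < N) :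
    (pivotFirst s h).2 (Fin.last n) = s.2 0 := by
  simp [pivotFirst]

lemma pivotLast_perm_zero (s : Simplex (n + 1) N) : (pivotLast s).2 0 = s.2 (Fin.last n) := by
  show s.2 ((finRotate (n + 1)).symm 0) = _
  rw [(Equiv.symm_apply_eq _).2 finRotate_last.symm]

lemma pivotLast_pivotFirst (s : Simplex (n + 1) N) (h : (s.1 (s.2 0) : ℕ) + 1 < N) :
    pivotLast (pivotFirst s h) = s := by
  refine Prod.ext (funext fun k => Fin.ext ?_) ?_
  · rw [pivotLast_base_apply, pivotFirst_perm_last, pivotFirst_base_apply]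
    split_ifs <;> omega
  · simp [pivotLast, pivotFirst, ← Equiv.trans_assoc]

lemma pivotFirst_pivotLast (s : Simplex (n + 1) N) (h : 1 ≤ (s.1 (s.2 (Fin.last n)) : ℕ))
    (h' : ((pivotLast s).1 ((pivotLast s).2 0) : ℕ) + 1 < N) :
    pivotFirst (pivotLast s) h' = s := by
  refine Prod.ext (funext fun k => Fin.ext ?_) ?_
  · rw [pivotFirst_base_apply, pivotLast_perm_zero, pivotLast_base_apply]
    rcases eq_or_ne k (s.2 (Fin.last n)) with rfl | hk
    · simp only [if_true]
      omega
    · simp [hk]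
  · simp [pivotLast, pivotFirst, ← Equiv.trans_assoc]

lemma pivotInner_pivotInner (s : Simplex (n + 1) N) (i : Fin (n + 2)) :
    pivotInner (pivotInner s i) i = s := by
  simp [pivotInner, innerSwap, ← Equiv.trans_assoc]

lemma pivotInner_ne (s : Simplex (n + 1) N) {i : Fin (n + 2)} (h0 : i ≠ 0)
    (hl : i ≠ Fin.last (n + 1)) : pivotInner s i ≠ s := by
  have h0' : (i : ℕ) ≠ 0 := Fin.val_ne_iff.2 h0
  have hl' : (i : ℕ) ≠ n + 1 := Fin.val_ne_iff.2 hl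
  intro h
  have : innerSwap i = Equiv.refl _ := by
    simpa [pivotInner, Equiv.ext_iff] using congrArg Prod.snd h
  have := Equiv.ext_iff.1 this ⟨i - 1, by omega⟩
  simp [innerSwap, Equiv.swap_apply_left, Fin.ext_iff] at this
  omega

variable (N) in
structure IsSpernerLabelling (lab : (Fin n → ℕ) → Fin (n + 1)) : Prop where
  ne_castSucc : ∀ v : Fin n → ℕ, (∀ j, v j ≤ N) → ∀ k, v k = 0 → lab v ≠ k.castSucc
  le_castSucc : ∀ v : Fin n → ℕ, (∀ j, v j ≤ N) → ∀ k, v k = N → lab v ≤ k.castSucc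

def labels (lab : (Fin n → ℕ) → Fin (n + 1)) (s : Simplex n N) (i : Fin (n + 1)) : Fin (n + 1) :=
  lab (vertex s i)

def IsDoor (lab : (Fin n → ℕ) → Fin (n + 1)) (s : Simplex n N) (i : Fin (n + 1)) : Prop :=
  (univ.erase i).image (labels lab s) = univ.erase (Fin.last n)

instance (lab : (Fin n → ℕ) → Fin (n + 1)) (s : Simplex n N) : DecidablePred (IsDoor lab s) :=
  fun _ => inferInstanceAs (Decidable (_ = _))

lemma exists_labels_eq_of_isDoor {lab : (Fin n → ℕ) → Fin (n + 1)} {s : Simplex n N}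
    {i : Fin (n + 1)} (hd : IsDoor lab s i) {c : Fin (n + 1)} (hc : c ≠ Fin.last n) :
    ∃ j ≠ i, labels lab s j = c := by
  have : c ∈ (univ.erase i).image (labels lab s) := by
    rw [hd]
    exact mem_erase.2 ⟨hc, mem_univ _⟩
  simpa using this

lemma one_le_base_of_isDoor_last {lab : (Fin (n + 1) → ℕ) → Fin (n + 2)}
    (hlab : IsSpernerLabelling N lab) {s : Simplex (n + 1) N}
    (hd : IsDoor lab s (Fin.last (n + 1))) : 1 ≤ (s.1 (s.2 (Fin.last n)) : ℕ) := by
  by_contra h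
  obtain ⟨j, hj, hjk⟩ :=
    exists_labels_eq_of_isDoor hd (Fin.castSucc_ne_last (s.2 (Fin.last n)))
  have hjn : (j : ℕ) ≤ n := Nat.le_of_lt_succ (Fin.lt_last_iff_ne_last.2 hj)
  have hvk : vertex s j (s.2 (Fin.last n)) = 0 := by
    simp only [vertex, Equiv.symm_apply_apply, Fin.val_last, if_neg (Nat.not_lt.2 hjn)]
    omega
  exact hlab.ne_castSucc _ (vertex_le s j) _ hvk hjk

lemma perm_zero_eq_last_of_isDoor_zero {lab : (Fin (n + 1) → ℕ) → Fin (n + 2)}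
    (hlab : IsSpernerLabelling N lab) {s : Simplex (n + 1) N} (hd : IsDoor lab s 0)
    (htop : (s.1 (s.2 0) : ℕ) + 1 = N) : s.2 0 = Fin.last n := by
  set k := s.2 0
  obtain ⟨j, hj, hjk⟩ := exists_labels_eq_of_isDoor hd (Fin.castSucc_ne_last (Fin.last n))
  have hvk : vertex s j k = N := by
    simp [vertex, k, Nat.pos_of_ne_zero (Fin.val_ne_iff.2 hj), htop]
  have := hlab.le_castSucc _ (vertex_le s j) k hvk
  rw [labels] at hjk
  rw [hjk, Fin.castSucc_le_castSucc_iff] at this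
  exact le_antisymm (Fin.le_last k) this

lemma isDoor_pivotInner_iff {lab : (Fin (n + 1) → ℕ) → Fin (n + 2)} (s : Simplex (n + 1) N)
    {i : Fin (n + 2)} (h0 : i ≠ 0) (hl : i ≠ Fin.last (n + 1)) :
    IsDoor lab (pivotInner s i) i ↔ IsDoor lab s i := by
  unfold IsDoor
  have : ∀ j ∈ univ.erase i, labels lab (pivotInner s i) j = labels lab s j :=
    fun j hj => congrArg lab (vertex_pivotInner s h0 hl (mem_erase.1 hj).1)
  rw [image_congr this]

lemma isDoor_pivotFirst_iff {lab : (Fin (n + 1) → ℕ) → Fin (n + 2)} (s : Simplex (n + 1) N)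
    (h : (s.1 (s.2 0) : ℕ) + 1 < N) :
    IsDoor lab (pivotFirst s h) (Fin.last (n + 1)) ↔ IsDoor lab s 0 := by
  unfold IsDoor labels
  simp only [← compl_singleton]
  rw [← Fin.image_castSucc, ← Fin.image_succ_univ, image_image, image_image]
  simp only [Function.comp_def, vertex_pivotFirst]

lemma isDoor_pivotLast_iff {lab : (Fin (n + 1) → ℕ) → Fin (n + 2)} (s : Simplex (n + 1) N)
    (h : 1 ≤ (s.1 (s.2 (Fin.last n)) : ℕ)) :
    IsDoor lab (pivotLast s) 0 ↔ IsDoor lab s (Fin.last (n + 1)) := by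
  unfold IsDoor labels
  simp only [← compl_singleton]
  rw [← Fin.image_castSucc, ← Fin.image_succ_univ, image_image, image_image]
  simp only [Function.comp_def, vertex_pivotLast s h]

def IsFullyLabelled (lab : (Fin n → ℕ) → Fin (n + 1)) (s : Simplex n N) : Prop :=
  Function.Surjective (labels lab s)

instance (lab : (Fin n → ℕ) → Fin (n + 1)) : DecidablePred (IsFullyLabelled (N := N) lab) :=
  fun s => Fintype.decidableSurjectiveFintype (labels lab s)

variable (N) in
def fullyLabelled (lab : (Fin n → ℕ) → Fin (n + 1)) : Finset (Simplex n N) :=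
  univ.filter (IsFullyLabelled lab)

variable (N) in
def doors (lab : (Fin n → ℕ) → Fin (n + 1)) : Finset (Simplex n N × Fin (n + 1)) :=
  univ.filter fun x => IsDoor lab x.1 x.2

lemma card_fullyLabelled_eq_card_doors (lab : (Fin n → ℕ) → Fin (n + 1)) :
    (#(fullyLabelled N lab) : ZMod 2) = #(doors N lab) := calc
  (#(fullyLabelled N lab) : ZMod 2)
      = ∑ s : Simplex n N, if IsFullyLabelled lab s then 1 else 0 := by
    simp [fullyLabelled, sum_boole]
  _ = ∑ s : Simplex n N, (#(univ.filter (IsDoor lab s)) : ZMod 2) :=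
    sum_congr rfl fun s _ => by
      convert (card_filter_image_erase_eq_erase (labels lab s) (Fin.last n)).symm <;> rfl
  _ = #(doors N lab) := by
    simp only [doors, card_filter, Fintype.sum_prod_type]
    push_cast
    rfl

/-- The other simplex through the door facet, or the door itself when that facet lies on the
boundary face `{x (s.2 0) = N}`. -/
def doorPartner (x : Simplex (n + 1) N × Fin (n + 2)) : Simplex (n + 1) N × Fin (n + 2) :=
  if x.2 = 0 then
    if h : (x.1.1 (x.1.2 0) : ℕ) + 1 < N then (pivotFirst x.1 h, Fin.last (n + 1)) else x
  else if x.2 = Fin.last (n + 1) then (pivotLast x.1, 0)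
  else (pivotInner x.1 x.2, x.2)

def OnTopFace (x : Simplex (n + 1) N × Fin (n + 2)) : Prop :=
  x.2 = 0 ∧ (x.1.1 (x.1.2 0) : ℕ) + 1 = N

instance : DecidablePred (OnTopFace (n := n) (N := N)) := fun _ => instDecidableAnd

lemma doorPartner_zero (s : Simplex (n + 1) N) (h : (s.1 (s.2 0) : ℕ) + 1 < N) :
    doorPartner (s, 0) = (pivotFirst s h, Fin.last (n + 1)) := by
  simp [doorPartner, h]

lemma doorPartner_last (s : Simplex (n + 1) N) :
    doorPartner (s, Fin.last (n + 1)) = (pivotLast s, 0) := by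
  simp [doorPartner]

lemma doorPartner_inner (s : Simplex (n + 1) N) {i : Fin (n + 2)} (h0 : i ≠ 0)
    (hl : i ≠ Fin.last (n + 1)) : doorPartner (s, i) = (pivotInner s i, i) := by
  simp [doorPartner, h0, hl]

lemma pivotLast_base_add_one_lt (s : Simplex (n + 1) N) (h : 1 ≤ (s.1 (s.2 (Fin.last n)) : ℕ)) :
    ((pivotLast s).1 ((pivotLast s).2 0) : ℕ) + 1 < N := by
  rw [pivotLast_perm_zero, pivotLast_base_apply, if_pos rfl]
  have := (s.1 (s.2 (Fin.last n))).isLt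
  omega

lemma doorPartner_spec {lab : (Fin (n + 1) → ℕ) → Fin (n + 2)}
    (hlab : IsSpernerLabelling N lab) {x : Simplex (n + 1) N × Fin (n + 2)}
    (hx : x ∈ doors N lab) : doorPartner x ∈ doors N lab ∧ doorPartner (doorPartner x) = x ∧
      (doorPartner x = x ↔ OnTopFace x) := by
  obtain ⟨s, i⟩ := x
  simp only [doors, mem_filter, mem_univ, true_and] at hx ⊢
  obtain rfl | rfl | ⟨h0, hl⟩ :
      i = 0 ∨ i = Fin.last (n + 1) ∨ (i ≠ 0 ∧ i ≠ Fin.last (n + 1)) := by tauto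
  · rcases Nat.lt_or_ge ((s.1 (s.2 0) : ℕ) + 1) N with h | h
    · rw [doorPartner_zero s h, doorPartner_last, pivotLast_pivotFirst]
      refine ⟨(isDoor_pivotFirst_iff s h).2 hx, rfl, ?_⟩
      simp [OnTopFace, Prod.ext_iff, h.ne]
    · have htop : (s.1 (s.2 0) : ℕ) + 1 = N := le_antisymm (s.1 (s.2 0)).isLt h
      have : doorPartner (s, 0) = (s, 0) := by simp [doorPartner, htop]
      simp [this, hx, OnTopFace, htop]
  · have h := one_le_base_of_isDoor_last hlab hx
    rw [doorPartner_last, doorPartner_zero _ (pivotLast_base_add_one_lt s h),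
      pivotFirst_pivotLast s h]
    refine ⟨(isDoor_pivotLast_iff s h).2 hx, rfl, ?_⟩
    simp [OnTopFace, Prod.ext_iff, Fin.last_pos.ne]
  · rw [doorPartner_inner s h0 hl, doorPartner_inner _ h0 hl, pivotInner_pivotInner]
    refine ⟨(isDoor_pivotInner_iff s h0 hl).2 hx, rfl, ?_⟩
    simp [OnTopFace, Prod.ext_iff, pivotInner_ne s h0 hl, h0]

lemma card_doors_eq_card_filter_onTopFace {lab : (Fin (n + 1) → ℕ) → Fin (n + 2)}
    (hlab : IsSpernerLabelling N lab) :
    (#(doors N lab) : ZMod 2) = #((doors N lab).filter OnTopFace) := by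
  have := card_modEq_card_filter_apply_eq_of_involutive (doors N lab) doorPartner
    (fun x hx => (doorPartner_spec hlab hx).1) (fun x hx => (doorPartner_spec hlab hx).2.1)
  rw [filter_congr fun x hx => (doorPartner_spec hlab hx).2.2] at this
  exact (ZMod.natCast_eq_natCast_iff _ _ _).2 this

variable (N) in
def topFaceLabelling (lab : (Fin (n + 1) → ℕ) → Fin (n + 2)) (v : Fin n → ℕ) : Fin (n + 1) :=
  Fin.clamp (lab (Fin.snoc v N)) n

lemma snoc_le {v : Fin n → ℕ} (hv : ∀ j, v j ≤ N) (j : Fin (n + 1)) :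
    (Fin.snoc v N : Fin (n + 1) → ℕ) j ≤ N := by
  induction j using Fin.lastCases with
  | last => simp
  | cast k => simpa using hv k

lemma castSucc_topFaceLabelling {lab : (Fin (n + 1) → ℕ) → Fin (n + 2)}
    (hlab : IsSpernerLabelling N lab) {v : Fin n → ℕ} (hv : ∀ j, v j ≤ N) :
    (topFaceLabelling N lab v).castSucc = lab (Fin.snoc v N) := by
  have := hlab.le_castSucc _ (snoc_le hv) (Fin.last n) (by simp)
  rw [Fin.le_iff_val_le_val] at this
  ext
  simp only [topFaceLabelling, Fin.val_castSucc, Fin.coe_clamp, Fin.val_last] at this ⊢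
  omega

lemma isSpernerLabelling_topFaceLabelling {lab : (Fin (n + 1) → ℕ) → Fin (n + 2)}
    (hlab : IsSpernerLabelling N lab) : IsSpernerLabelling N (topFaceLabelling N lab) where
  ne_castSucc v hv k hk h := hlab.ne_castSucc _ (snoc_le hv) k.castSucc (by simpa using hk)
    (by rw [← castSucc_topFaceLabelling hlab hv, h])
  le_castSucc v hv k hk := by
    have := hlab.le_castSucc _ (snoc_le hv) k.castSucc (by simpa using hk)
    rwa [← castSucc_topFaceLabelling hlab hv, Fin.castSucc_le_castSucc_iff] at this

def consLast (π : Equiv.Perm (Fin n)) : Equiv.Perm (Fin (n + 1)) where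
  toFun := Fin.cases (Fin.last n) fun j => (π j).castSucc
  invFun := Fin.lastCases 0 fun k => (π.symm k).succ
  left_inv i := by cases i using Fin.cases <;> simp
  right_inv k := by cases k using Fin.lastCases <;> simp

@[simp] lemma consLast_zero (π : Equiv.Perm (Fin n)) : consLast π 0 = Fin.last n := by
  simp [consLast]

@[simp] lemma consLast_succ (π : Equiv.Perm (Fin n)) (j : Fin n) :
    consLast π j.succ = (π j).castSucc := by
  simp [consLast]

@[simp] lemma consLast_symm_last (π : Equiv.Perm (Fin n)) :
    (consLast π).symm (Fin.last n) = 0 := by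
  rw [Equiv.symm_apply_eq, consLast_zero]

@[simp] lemma consLast_symm_castSucc (π : Equiv.Perm (Fin n)) (k : Fin n) :
    (consLast π).symm k.castSucc = (π.symm k).succ := by
  rw [Equiv.symm_apply_eq, consLast_succ, Equiv.apply_symm_apply]

def tailPerm (π : Equiv.Perm (Fin (n + 1))) (h : π 0 = Fin.last n) : Equiv.Perm (Fin n) where
  toFun j := (π j.succ).castPred fun hj => Fin.succ_ne_zero j (π.injective (hj.trans h.symm))
  invFun k := (π.symm k.castSucc).pred fun hk =>
    Fin.castSucc_ne_last k (by rw [← h, ← hk, Equiv.apply_symm_apply])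
  left_inv j := by simp
  right_inv k := by simp

lemma consLast_tailPerm (π : Equiv.Perm (Fin (n + 1))) (h : π 0 = Fin.last n) :
    consLast (tailPerm π h) = π := by
  ext i
  cases i using Fin.cases <;> simp [tailPerm, h]

lemma tailPerm_consLast (π : Equiv.Perm (Fin n)) (h : consLast π 0 = Fin.last n) :
    tailPerm (consLast π) h = π := by
  ext j
  simp [tailPerm]

variable (N) in
/-- The simplex over `s` with the top face `{x (Fin.last n) = N}` as the facet opposite to
its vertex `0`. -/
def liftTop (hN : 1 ≤ N) (s : Simplex n N) : Simplex (n + 1) N :=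
  (Fin.snoc s.1 ⟨N - 1, by omega⟩, consLast s.2)

def dropTop (s : Simplex (n + 1) N) (h : s.2 0 = Fin.last n) : Simplex n N :=
  (Fin.init s.1, tailPerm s.2 h)

lemma vertex_liftTop (hN : 1 ≤ N) (s : Simplex n N) (j : Fin (n + 1)) :
    vertex (liftTop N hN s) j.succ = Fin.snoc (vertex s j) N := by
  funext k
  induction k using Fin.lastCases with
  | last =>
    simp [vertex, liftTop]
    omega
  | cast k =>
    simp [vertex, liftTop, Fin.val_succ]

lemma isDoor_liftTop_iff {lab : (Fin (n + 1) → ℕ) → Fin (n + 2)}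
    (hlab : IsSpernerLabelling N lab) (hN : 1 ≤ N) (s : Simplex n N) :
    IsDoor lab (liftTop N hN s) 0 ↔ IsFullyLabelled (topFaceLabelling N lab) s := by
  have : labels lab (liftTop N hN s) ∘ Fin.succ =
      Fin.castSucc ∘ labels (topFaceLabelling N lab) s := by
    funext j
    simp only [Function.comp_apply, labels, vertex_liftTop,
      castSucc_topFaceLabelling hlab (vertex_le s j)]
  unfold IsDoor IsFullyLabelled
  simp only [← compl_singleton]
  rw [← Fin.image_castSucc, ← Fin.image_succ_univ, image_image, this, ← image_image,
    (image_injective (Fin.castSucc_injective _)).eq_iff, ← coe_inj, coe_image, coe_univ,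
    Set.image_univ, Set.range_eq_univ]

lemma liftTop_dropTop (hN : 1 ≤ N) (s : Simplex (n + 1) N) (h : s.2 0 = Fin.last n)
    (htop : (s.1 (s.2 0) : ℕ) + 1 = N) : liftTop N hN (dropTop s h) = s := by
  refine Prod.ext (funext fun k => ?_) (consLast_tailPerm s.2 h)
  induction k using Fin.lastCases with
  | last =>
    rw [h] at htop
    ext
    simp [liftTop]
    omega
  | cast k => simp [liftTop, dropTop, Fin.init]

lemma dropTop_liftTop (hN : 1 ≤ N) (s : Simplex n N) (h : (liftTop N hN s).2 0 = Fin.last n) :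
    dropTop (liftTop N hN s) h = s :=
  Prod.ext (funext fun k => by simp [liftTop, dropTop]) (tailPerm_consLast s.2 h)

lemma perm_zero_eq_last_of_mem_filter_onTopFace {lab : (Fin (n + 1) → ℕ) → Fin (n + 2)}
    (hlab : IsSpernerLabelling N lab) {x : Simplex (n + 1) N × Fin (n + 2)}
    (hx : x ∈ (doors N lab).filter OnTopFace) : x.1.2 0 = Fin.last n := by
  simp only [doors, mem_filter, mem_univ, true_and, OnTopFace] at hx
  obtain ⟨hd, h0, htop⟩ := hx
  exact perm_zero_eq_last_of_isDoor_zero hlab (h0 ▸ hd) htop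

lemma card_fullyLabelled_topFaceLabelling_eq_card_onTopFace
    {lab : (Fin (n + 1) → ℕ) → Fin (n + 2)} (hlab : IsSpernerLabelling N lab) (hN : 1 ≤ N) :
    #(fullyLabelled N (topFaceLabelling N lab)) = #((doors N lab).filter OnTopFace) := by
  have hlift (s : Simplex n N) : OnTopFace (liftTop N hN s, 0) := by
    refine ⟨rfl, ?_⟩
    simp [liftTop]
    omega
  refine card_bij' (fun s _ => (liftTop N hN s, 0))
    (fun x hx => dropTop x.1 (perm_zero_eq_last_of_mem_filter_onTopFace hlab hx)) ?_ ?_ ?_ ?_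
  · intro s hs
    simp only [fullyLabelled, doors, mem_filter, mem_univ, true_and] at hs ⊢
    exact ⟨(isDoor_liftTop_iff hlab hN s).2 hs, hlift s⟩
  · intro x hx
    have hx' := hx
    simp only [doors, fullyLabelled, mem_filter, mem_univ, true_and, OnTopFace] at hx' ⊢
    obtain ⟨hd, h0, htop⟩ := hx'
    rw [← isDoor_liftTop_iff hlab hN, liftTop_dropTop hN _ _ htop, ← h0]
    exact hd
  · intro s _
    exact dropTop_liftTop hN s _
  · intro x hx
    have hx' := (mem_filter.1 hx).2
    exact Prod.ext (liftTop_dropTop hN _ _ hx'.2) hx'.1.symm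

lemma card_fullyLabelled_eq_topFaceLabelling {lab : (Fin (n + 1) → ℕ) → Fin (n + 2)}
    (hlab : IsSpernerLabelling N lab) (hN : 1 ≤ N) :
    (#(fullyLabelled N lab) : ZMod 2) = #(fullyLabelled N (topFaceLabelling N lab)) := by
  rw [card_fullyLabelled_eq_card_doors, card_doors_eq_card_filter_onTopFace hlab,
    card_fullyLabelled_topFaceLabelling_eq_card_onTopFace hlab hN]

/-- Sperner's lemma for the Kuhn triangulation, in its parity form. -/
theorem card_fullyLabelled_eq_one {lab : (Fin n → ℕ) → Fin (n + 1)}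
    (hlab : IsSpernerLabelling N lab) (hN : 1 ≤ N) : (#(fullyLabelled N lab) : ZMod 2) = 1 := by
  induction n with
  | zero =>
    have : fullyLabelled N lab = univ := eq_univ_of_forall fun _ =>
      mem_filter.2 ⟨mem_univ _, fun _ => ⟨0, Subsingleton.elim (α := Fin 1) _ _⟩⟩
    simp [this]
  | succ n ih =>
    rw [card_fullyLabelled_eq_topFaceLabelling hlab hN]
    exact ih (isSpernerLabelling_topFaceLabelling hlab)

theorem exists_isFullyLabelled {lab : (Fin n → ℕ) → Fin (n + 1)}
    (hlab : IsSpernerLabelling N lab) (hN : 1 ≤ N) : ∃ s : Simplex n N, IsFullyLabelled lab s := by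
  by_contra! h
  have : fullyLabelled N lab = ∅ := filter_false_of_mem fun s _ => h s
  simpa [this] using card_fullyLabelled_eq_one hlab hN

end Kuhn

theorem IsCompact.exists_mem_eq_of_forall_dist_lt {X E : Type*} [TopologicalSpace X]
    [MetricSpace E] {s : Set X} (hs : IsCompact s) {f : X → E} (hf : ContinuousOn f s) {y : E}
    (h : ∀ ε > 0, ∃ x ∈ s, dist (f x) y < ε) : ∃ x ∈ s, f x = y := by
  have : y ∈ closure (f '' s) :=
    Metric.mem_closure_iff.2 fun ε hε => by
      obtain ⟨x, hx, hxy⟩ := h ε hε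
      exact ⟨f x, Set.mem_image_of_mem f hx, by rwa [dist_comm]⟩
  rwa [(hs.image_of_continuousOn hf).isClosed.closure_eq] at this

section PoincareMiranda

open Set

variable {m : ℕ} {a b : Fin m → ℝ}

noncomputable def gridPoint (a b : Fin m → ℝ) (N : ℕ) (v : Fin m → ℕ) : Fin m → ℝ :=
  fun k => a k + v k / N * (b k - a k)

lemma gridPoint_mem_Icc (hab : a ≤ b) {N : ℕ} {v : Fin m → ℕ} (hv : ∀ k, v k ≤ N) :
    gridPoint a b N v ∈ Icc a b := by
  have h (k : Fin m) : 0 ≤ (v k / N : ℝ) ∧ (v k / N : ℝ) ≤ 1 :=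
    ⟨by positivity, div_le_one_of_le₀ (by exact_mod_cast hv k) (Nat.cast_nonneg N)⟩
  refine ⟨fun k => ?_, fun k => ?_⟩ <;> simp only [gridPoint] <;>
    nlinarith [h k, sub_nonneg.2 (hab k)]

lemma gridPoint_apply_of_eq_zero (N : ℕ) {v : Fin m → ℕ} {k : Fin m} (h : v k = 0) :
    gridPoint a b N v k = a k := by
  simp [gridPoint, h]

lemma gridPoint_apply_of_eq {N : ℕ} (hN : N ≠ 0) {v : Fin m → ℕ} {k : Fin m} (h : v k = N) :
    gridPoint a b N v k = b k := by
  simp [gridPoint, h, hN]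

lemma dist_gridPoint_le (hab : a ≤ b) (N : ℕ) {v w : Fin m → ℕ}
    (hvw : ∀ k, v k ≤ w k + 1 ∧ w k ≤ v k + 1) :
    dist (gridPoint a b N v) (gridPoint a b N w) ≤ ‖b - a‖ / N := by
  refine (dist_pi_le_iff (by positivity)).2 fun k => ?_
  have hvw' : |(v k : ℝ) - w k| ≤ 1 := by
    rw [abs_sub_le_iff]
    constructor <;> linarith [show (v k : ℝ) ≤ w k + 1 by exact_mod_cast (hvw k).1,
      show (w k : ℝ) ≤ v k + 1 by exact_mod_cast (hvw k).2]
  have hba : b k - a k ≤ ‖b - a‖ := by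
    simpa [abs_of_nonneg (sub_nonneg.2 (hab k))] using norm_le_pi_norm (b - a) k
  calc dist (gridPoint a b N v k) (gridPoint a b N w k)
      = |(v k : ℝ) - w k| / N * (b k - a k) := by
        rw [Real.dist_eq, show gridPoint a b N v k - gridPoint a b N w k
            = ((v k : ℝ) - w k) / N * (b k - a k) by simp only [gridPoint]; ring,
          abs_mul, abs_div, Nat.abs_cast, abs_of_nonneg (sub_nonneg.2 (hab k))]
    _ ≤ 1 / N * ‖b - a‖ := by gcongr; exact sub_nonneg.2 (hab k)
    _ = ‖b - a‖ / N := by ring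

variable {G : (Fin m → ℝ) → Fin m → ℝ}

/-- The first index at which `y` is nonnegative, or `Fin.last m` if there is none. -/
noncomputable def firstNonneg (y : Fin m → ℝ) : Fin (m + 1) :=
  Fin.find (fun j => ∀ k : Fin m, k.castSucc = j → 0 ≤ y k)
    ⟨Fin.last m, fun k hk => absurd hk (Fin.castSucc_ne_last k)⟩

lemma nonneg_of_firstNonneg_eq {y : Fin m → ℝ} {k : Fin m} (h : firstNonneg y = k.castSucc) :
    0 ≤ y k :=
  Fin.find_spec (p := fun j => ∀ k : Fin m, k.castSucc = j → 0 ≤ y k) _ k h.symm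

lemma neg_of_firstNonneg_eq_last {y : Fin m → ℝ} (h : firstNonneg y = Fin.last m) (k : Fin m) :
    y k < 0 := by
  have := Fin.find_min _ (h ▸ Fin.castSucc_lt_last k : k.castSucc < firstNonneg y)
  simp only [not_forall] at this
  obtain ⟨k', hk', hy⟩ := this
  rw [Fin.castSucc_injective _ hk'] at hy
  exact not_le.1 hy

lemma firstNonneg_le {y : Fin m → ℝ} {k : Fin m} (h : 0 ≤ y k) :
    firstNonneg y ≤ k.castSucc :=
  Fin.find_le_of_pos _ fun _ hk' => Fin.castSucc_injective _ hk' ▸ h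

lemma isSpernerLabelling_firstNonneg (hab : a ≤ b) {N : ℕ} (hN : N ≠ 0)
    (hlow : ∀ x ∈ Icc a b, ∀ k, x k = a k → G x k < 0)
    (hhigh : ∀ x ∈ Icc a b, ∀ k, x k = b k → 0 < G x k) :
    Kuhn.IsSpernerLabelling N fun v => firstNonneg (G (gridPoint a b N v)) where
  ne_castSucc _ hv k hk h := (hlow _ (gridPoint_mem_Icc hab hv) k
    (gridPoint_apply_of_eq_zero N hk)).not_ge (nonneg_of_firstNonneg_eq h)
  le_castSucc _ hv k hk :=
    firstNonneg_le (hhigh _ (gridPoint_mem_Icc hab hv) k (gridPoint_apply_of_eq hN hk)).le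

theorem exists_norm_lt_of_faces_neg_pos (hab : a ≤ b) (hG : ContinuousOn G (Icc a b))
    (hlow : ∀ x ∈ Icc a b, ∀ k, x k = a k → G x k < 0)
    (hhigh : ∀ x ∈ Icc a b, ∀ k, x k = b k → 0 < G x k) {ε : ℝ} (hε : 0 < ε) :
    ∃ x ∈ Icc a b, ‖G x‖ < ε := by
  obtain ⟨δ, hδ, hGδ⟩ := Metric.uniformContinuousOn_iff.1
    (isCompact_Icc.uniformContinuousOn_of_continuous hG) ε hε
  obtain ⟨N, hN⟩ := exists_nat_gt (‖b - a‖ / δ)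
  have hN0 : 0 < N := by exact_mod_cast (div_nonneg (norm_nonneg _) hδ.le).trans_lt hN
  have hmesh : ‖b - a‖ / N < δ := by
    rw [div_lt_iff₀ (by exact_mod_cast hN0)]
    rwa [div_lt_iff₀ hδ, mul_comm] at hN
  set P := gridPoint a b N
  obtain ⟨s, hs⟩ := Kuhn.exists_isFullyLabelled
    (isSpernerLabelling_firstNonneg (G := G) hab hN0.ne' hlow hhigh) hN0
  have hmem (i) : P (Kuhn.vertex s i) ∈ Icc a b := gridPoint_mem_Icc hab (Kuhn.vertex_le s i)
  obtain ⟨i, hi⟩ := hs (Fin.last m)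
  refine ⟨P (Kuhn.vertex s i), hmem i, (pi_norm_lt_iff hε).2 fun k => ?_⟩
  obtain ⟨j, hj⟩ := hs k.castSucc
  have hclose : dist (G (P (Kuhn.vertex s j))) (G (P (Kuhn.vertex s i))) < ε :=
    hGδ _ (hmem j) _ (hmem i) ((dist_gridPoint_le hab N fun k =>
      ⟨Kuhn.vertex_le_vertex_add_one s j i k, Kuhn.vertex_le_vertex_add_one s i j k⟩).trans_lt
        hmesh)
  have hk := (dist_le_pi_dist _ _ k).trans_lt hclose
  rw [Real.dist_eq, abs_lt] at hk
  rw [Real.norm_eq_abs, abs_lt]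
  have hneg := neg_of_firstNonneg_eq_last hi k
  have hnonneg := nonneg_of_firstNonneg_eq hj
  constructor <;> linarith

theorem exists_eq_zero_of_faces_neg_pos (hab : a ≤ b) (hG : ContinuousOn G (Icc a b))
    (hlow : ∀ x ∈ Icc a b, ∀ k, x k = a k → G x k < 0)
    (hhigh : ∀ x ∈ Icc a b, ∀ k, x k = b k → 0 < G x k) : ∃ x ∈ Icc a b, G x = 0 :=
  isCompact_Icc.exists_mem_eq_of_forall_dist_lt hG fun _ hε => by
    simpa using exists_norm_lt_of_faces_neg_pos hab hG hlow hhigh hε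

/-- The Poincaré–Miranda theorem. -/
theorem exists_eq_zero_of_faces_nonpos_nonneg (hab : ∀ k, a k < b k)
    (hG : ContinuousOn G (Icc a b)) (hlow : ∀ x ∈ Icc a b, ∀ k, x k = a k → G x k ≤ 0)
    (hhigh : ∀ x ∈ Icc a b, ∀ k, x k = b k → 0 ≤ G x k) : ∃ x ∈ Icc a b, G x = 0 := by
  refine isCompact_Icc.exists_mem_eq_of_forall_dist_lt hG fun ε hε => ?_
  -- `x ↦ G x + η (2x - a - b)` satisfies the strict boundary conditions.
  set η := ε / (‖b - a‖ + 1)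
  have hη : 0 < η := by positivity
  have hηε : η * ‖b - a‖ < ε := by
    rw [div_mul_eq_mul_div, div_lt_iff₀ (by positivity)]
    nlinarith [norm_nonneg (b - a)]
  obtain ⟨x, hx, hx0⟩ :=
    exists_eq_zero_of_faces_neg_pos (G := fun x k => G x k + η * (2 * x k - a k - b k))
      (fun k => (hab k).le) (by fun_prop) (fun x hx k hk => by nlinarith [hlow x hx k hk, hab k])
      (fun x hx k hk => by nlinarith [hhigh x hx k hk, hab k])
  refine ⟨x, hx, ?_⟩
  rw [dist_zero_right]
  refine lt_of_le_of_lt ((pi_norm_le_iff_of_nonneg (by positivity)).2 fun k => ?_) hηε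
  have hk := congrFun hx0 k
  have hba : b k - a k ≤ ‖b - a‖ := by
    simpa [abs_of_nonneg (sub_nonneg.2 (hab k).le)] using norm_le_pi_norm (b - a) k
  simp only [Pi.zero_apply] at hk
  rw [Real.norm_eq_abs, abs_le]
  constructor <;> nlinarith [hx.1 k, hx.2 k]

end PoincareMiranda

theorem Set.update_mem_Icc {ι α : Type*} [DecidableEq ι] [Preorder α] {a b x : ι → α} {i : ι}
    {c : α} (hx : x ∈ Set.Icc a b) (hc : c ∈ Set.Icc (a i) (b i)) :
    Function.update x i c ∈ Set.Icc a b :=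
  ⟨le_update_iff.2 ⟨hc.1, fun j _ => hx.1 j⟩, update_le_iff.2 ⟨hc.2, fun j _ => hx.2 j⟩⟩

theorem monotoneOn_Icc_of_update {ι α β : Type*} [Fintype ι] [DecidableEq ι] [Preorder α]
    [Preorder β] {a b : ι → α} {f : (ι → α) → β}
    (hf : ∀ i, ∀ x ∈ Set.Icc a b, ∀ s t : α, a i ≤ s → s ≤ t → t ≤ b i →
      f (Function.update x i s) ≤ f (Function.update x i t)) :
    MonotoneOn f (Set.Icc a b) := by
  suffices ∀ I : Finset ι, ∀ x ∈ Set.Icc a b, ∀ y ∈ Set.Icc a b, x ≤ y →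
      (∀ i ∉ I, x i = y i) → f x ≤ f y from
    fun x hx y hy hxy => this Finset.univ x hx y hy hxy fun i hi => absurd (mem_univ i) hi
  intro I
  induction I using Finset.induction_on with
  | empty => exact fun x _ y _ _ h => (funext fun i => h i (notMem_empty i) : x = y) ▸ le_rfl
  | insert i I _ ih =>
    intro x hx y hy hxy hI
    set z := Function.update y i (x i)
    have hz : z ∈ Set.Icc a b := Set.update_mem_Icc hy ⟨hx.1 i, hx.2 i⟩
    calc f x ≤ f z := ih x hx z hz (le_update_iff.2 ⟨le_rfl, fun j _ => hxy j⟩) fun j hj => by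
          rcases eq_or_ne j i with rfl | hji
          · simp [z]
          · simpa [z, hji] using hI j (by simp [hji, hj])
      _ ≤ f (Function.update y i (y i)) := hf i y hy _ _ (hx.1 i) (hxy i) (hy.2 i)
      _ = f y := by rw [Function.update_eq_self]

theorem multidim_intermediate_value_general
    (m : ℕ) (a b : Fin m → ℝ) (hab : ∀ k, a k < b k)
    (F : (Fin m → ℝ) → (Fin m → ℝ))
    (hcont : ContinuousOn F (Set.Icc a b))
    (hmono : ∀ (k i : Fin m), ∀ x ∈ Set.Icc a b, ∀ s t : ℝ,
      a i ≤ s → s ≤ t → t ≤ b i →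
      F (Function.update x i s) k ≤ F (Function.update x i t) k) :
    ∀ Fstar : Fin m → ℝ,
      (∀ k, Fstar k ∈
        Set.Icc (F (Function.update b k (a k)) k) (F (Function.update a k (b k)) k)) →
      ∃ x ∈ Set.Icc a b, F x = Fstar := by
  intro Fstar hFstar
  have ha : a ∈ Set.Icc a b := Set.left_mem_Icc.2 fun k => (hab k).le
  have hb : b ∈ Set.Icc a b := Set.right_mem_Icc.2 fun k => (hab k).le
  have hF (k : Fin m) : MonotoneOn (F · k) (Set.Icc a b) := monotoneOn_Icc_of_update (hmono k)
  obtain ⟨x, hx, hx0⟩ := exists_eq_zero_of_faces_nonpos_nonneg (G := fun x => F x - Fstar) hab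
    (hcont.sub continuousOn_const)
    (fun x hx k hxk => by
      have : F x k ≤ F (Function.update b k (a k)) k :=
        hF k hx (Set.update_mem_Icc hb (Set.left_mem_Icc.2 (hab k).le))
          (le_update_iff.2 ⟨hxk.le, fun j _ => hx.2 j⟩)
      simpa using this.trans (hFstar k).1)
    (fun x hx k hxk => by
      have : F (Function.update a k (b k)) k ≤ F x k :=
        hF k (Set.update_mem_Icc ha (Set.right_mem_Icc.2 (hab k).le)) hx
          (update_le_iff.2 ⟨hxk.ge, fun j _ => hx.1 j⟩)
      simpa using (hFstar k).2.trans this)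
  exact ⟨x, hx, sub_eq_zero.1 hx0⟩

/-- Lemma 3.5 of [HKP97]: multi-dimensional intermediate value theorem for
continuous maps `F : ∏ₖ [aₖ,bₖ] → ℝ^m` whose components are monotonically increasing in
each argument. -/
theorem multidim_intermediate_value
    (m : ℕ) (a b : Fin m → ℝ) (hab : ∀ k, a k < b k)
    (F : (Fin m → ℝ) → (Fin m → ℝ))
    (hcont : ContinuousOn F (Set.Icc a b))
    (hmono : ∀ (k i : Fin m), ∀ x ∈ Set.Icc a b, ∀ s t : ℝ,
      a i ≤ s → s ≤ t → t ≤ b i →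
      F (Function.update x i s) k ≤ F (Function.update x i t) k)
    (hlt : ∀ k, F (Function.update b k (a k)) k < F (Function.update a k (b k)) k) :
    ∀ Fstar : Fin m → ℝ,
      (∀ k, Fstar k ∈
        Set.Icc (F (Function.update b k (a k)) k) (F (Function.update a k (b k)) k)) →
      ∃ x ∈ Set.Icc a b, F x = Fstar :=
  multidim_intermediate_value_general m a b hab F hcont hmono
end

section
/- Let m ∈ ℕ and let B̃_0 < Ã_1 < B̃_1 < ... < Ã_m < B̃_m be real numbers with Ã_j ≠ 0. Define r̃_j = ((B̃_j − Ã_j)/Ã_j) · Π_{i≠j} ((B̃_i − Ã_j)/(Ã_i − Ã_j)). Then the vector z = (r̃_1, ..., r̃_m) solves the linear system Σ_{i=1}^m (Ã_i/(Ã_i − B̃_j)) z_i = −1 for j = 1, ..., m. -/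
/-! With `f = ∏_{k ≠ j} (X - B̃ₖ)`, the `i`-th summand of the system equals
`-f(Ãᵢ) / ∏_{k ≠ i} (Ãᵢ - Ãₖ)`. Since `f` is monic of degree `m - 1`, Lagrange interpolation at
the distinct nodes `Ãᵢ` shows that these quotients sum to the leading coefficient `1` of `f`. -/

open Polynomial Finset

section Field

variable {ι F : Type*} [DecidableEq ι] [Field F] {s : Finset ι} {a b : ι → F}

theorem sum_prod_sub_div_prod_sub_eq_one (ha : Set.InjOn a s) {j : ι} (hj : j ∈ s) :
    ∑ i ∈ s, (∏ k ∈ s.erase j, (a i - b k)) / ∏ k ∈ s.erase i, (a i - a k) = 1 := by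
  set f := Lagrange.nodal (s.erase j) b
  have hdeg : f.natDegree = #s - 1 := by
    rw [Lagrange.natDegree_nodal, card_erase_of_mem hj]
  have hlt : f.degree < #s := by
    rw [Lagrange.degree_nodal, card_erase_of_mem hj]
    exact_mod_cast Nat.sub_lt (card_pos.mpr ⟨j, hj⟩) one_pos
  simp_rw [← Lagrange.eval_nodal (s := s.erase j)]
  rw [← Lagrange.coeff_eq_sum ha hlt, ← hdeg]
  exact Lagrange.nodal_monic.coeff_natDegree

theorem div_sub_mul_prod_div_eq_neg {i j : ι} (hi : i ∈ s) (hj : j ∈ s) (hab : a i ≠ b j) :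
    (b i - a i) / (a i - b j) * ∏ k ∈ s.erase i, (b k - a i) / (a k - a i) =
      -((∏ k ∈ s.erase j, (a i - b k)) / ∏ k ∈ s.erase i, (a i - a k)) := by
  have hprod : (b i - a i) * ∏ k ∈ s.erase i, (a i - b k) =
      -((a i - b j) * ∏ k ∈ s.erase j, (a i - b k)) := by
    rw [mul_prod_erase s (fun k => a i - b k) hj, ← mul_prod_erase s (fun k => a i - b k) hi]
    ring
  have hflip (k : ι) : (b k - a i) / (a k - a i) = (a i - b k) / (a i - a k) := by
    rw [← neg_div_neg_eq, neg_sub, neg_sub]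
  simp_rw [hflip, prod_div_distrib]
  rw [div_mul_div_comm, hprod, neg_div, mul_div_mul_left _ _ (sub_ne_zero_of_ne hab)]

theorem sum_div_sub_mul_explicit_solution_eq_neg_one (ha : Set.InjOn a s) {j : ι} (hj : j ∈ s)
    (hab : ∀ i ∈ s, a i ≠ b j) (ha0 : ∀ i ∈ s, a i ≠ 0) :
    ∑ i ∈ s, a i / (a i - b j) *
      ((b i - a i) / a i * ∏ k ∈ s.erase i, (b k - a i) / (a k - a i)) = -1 := by
  calc _ = ∑ i ∈ s, -((∏ k ∈ s.erase j, (a i - b k)) / ∏ k ∈ s.erase i, (a i - a k)) := by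
        refine sum_congr rfl fun i hi => ?_
        rw [← div_sub_mul_prod_div_eq_neg hi hj (hab i hi), ← mul_assoc,
          div_mul_div_comm, mul_comm (a i), mul_div_mul_right _ _ (ha0 i hi)]
    _ = -1 := by rw [sum_neg_distrib, sum_prod_sub_div_prod_sub_eq_one ha hj]

end Field

section Interlacing

variable {α : Type*} [LinearOrder α] {m : ℕ} {A : Fin m → α} {B : Fin (m + 1) → α}

theorem strictMono_right_of_interlacing (h : ∀ j, B j.castSucc < A j ∧ A j < B j.succ) :
    StrictMono B :=
  Fin.strictMono_iff_lt_succ.mpr fun i => (h i).1.trans (h i).2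

theorem strictMono_of_interlacing (h : ∀ j, B j.castSucc < A j ∧ A j < B j.succ) :
    StrictMono A := by
  intro i k hik
  calc A i < B i.succ := (h i).2
    _ ≤ B k.castSucc :=
      (strictMono_right_of_interlacing h).monotone (Fin.succ_le_castSucc_iff.mpr hik)
    _ < A k := (h k).1

theorem ne_succ_of_interlacing (h : ∀ j, B j.castSucc < A j ∧ A j < B j.succ) (i k : Fin m) :
    A i ≠ B k.succ := by
  rcases le_or_gt i k with hik | hki
  · exact ((strictMono_of_interlacing h).monotone hik |>.trans_lt (h k).2).ne
  · have hB := (strictMono_right_of_interlacing h).monotone (Fin.succ_le_castSucc_iff.mpr hki)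
    exact (hB.trans_lt (h i).1).ne'

end Interlacing

/-- Here `A j` is `Ã_{j+1}` and `B j` is `B̃_j`. -/
theorem explicit_solution_linear_system
    (m : ℕ) (A : Fin m → ℝ) (B : Fin (m + 1) → ℝ)
    (hinter : ∀ j : Fin m, B j.castSucc < A j ∧ A j < B j.succ)
    (hA0 : ∀ j, A j ≠ 0)
    (r : Fin m → ℝ)
    (hr : ∀ j, r j = (B j.succ - A j) / A j *
      ∏ i ∈ Finset.univ.erase j, (B i.succ - A j) / (A i - A j)) :
    ∀ j : Fin m, ∑ i, A i / (A i - B j.succ) * r i = -1 := by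
  intro j
  simp_rw [hr]
  exact sum_div_sub_mul_explicit_solution_eq_neg_one (b := fun k => B k.succ)
    (strictMono_of_interlacing hinter).injective.injOn
    (mem_univ j) (fun i _ => ne_succ_of_interlacing hinter i j) (fun i _ => hA0 i)
end

section
/- Let m ∈ ℕ, B̃_0 < Ã_1 < B̃_1 < ... < Ã_m < B̃_m with Ã_j ≠ 0, l_0,...,l_m > 0, N_1,...,N_m > 0. Set r̃_j = ((B̃_j − Ã_j)/Ã_j) Π_{i≠j}((B̃_i − Ã_j)/(Ã_i − Ã_j)), α̃_j = r̃_j(Ã_j − B̃_0)l_0/N_j, β̃_j = sqrt(Ã_j l_j/(r̃_j(Ã_j − B̃_0)l_0)), γ̃ = B̃_0(1 + Σ_{j=1}^m r̃_j) l_0. Then α̃_j β̃_j² N_j/l_j = Ã_j for each j = 1,...,m, and each B̃_j (j = 0,...,m) satisfies B̃_j (l_0 + Σ_{i=1}^m Ã_i l_i/(β̃_i²(Ã_i − B̃_j))) = γ̃. -/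
/-!
Put `c i = r̃ i * (Ã i - B̃₀)`. Then `Ã i l i / (β̃ i ^ 2 * (Ã i - x)) = l₀ * c i / (Ã i - x)`,
so the gap equation at `x` says that the secular function `x * (1 + ∑ c i / (Ã i - x))` takes
the value `b = B̃₀ (1 + ∑ r̃ i)`. Multiplying `secular - b` by `∏ (x - Ã i)` gives a monic
polynomial of degree `m + 1`. The choice of `r̃` makes it agree with `∏ₖ (x - B̃ k)` at the
`m + 1` points `B̃₀, Ã₁, …, Ã_m`, so the two polynomials coincide and every `B̃ k` is a root.
-/

open Polynomial Finset

section Secular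

variable {K : Type*} [Field K] {m : ℕ}

noncomputable def secularPoly (b : K) (a c : Fin m → K) : K[X] :=
  (X - C b) * ∏ i, (X - C (a i)) - X * ∑ i, C (c i) * ∏ i' ∈ univ.erase i, (X - C (a i'))

def secular (a c : Fin m → K) (x : K) : K := x * (1 + ∑ i, c i / (a i - x))

theorem eval_secularPoly (b x : K) (a c : Fin m → K) :
    (secularPoly b a c).eval x =
      (x - b) * ∏ i, (x - a i) - x * ∑ i, c i * ∏ i' ∈ univ.erase i, (x - a i') := by
  simp [secularPoly, eval_prod, eval_finsetSum]

theorem eval_secularPoly_eq_mul {x : K} {a : Fin m → K} (hx : ∀ i, x ≠ a i) (b : K)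
    (c : Fin m → K) :
    (secularPoly b a c).eval x = (∏ i, (x - a i)) * (secular a c x - b) := by
  have hsum : ∀ i, c i / (a i - x) * ∏ i', (x - a i') =
      -(c i * ∏ i' ∈ univ.erase i, (x - a i')) := by
    intro i
    rw [← mul_prod_erase _ _ (mem_univ i)]
    field_simp [sub_ne_zero.mpr (hx i).symm]
    ring
  have hs : (∑ i, c i / (a i - x)) * ∏ i', (x - a i') =
      -∑ i, c i * ∏ i' ∈ univ.erase i, (x - a i') := by
    rw [sum_mul, sum_congr rfl fun i _ => hsum i, sum_neg_distrib]
  rw [eval_secularPoly, secular]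
  linear_combination (-x) * hs

theorem eval_secularPoly_node (b : K) (a c : Fin m → K) (i : Fin m) :
    (secularPoly b a c).eval (a i) = -(a i * c i * ∏ i' ∈ univ.erase i, (a i - a i')) := by
  rw [eval_secularPoly, prod_eq_zero (mem_univ i) (sub_self _), mul_zero, zero_sub,
    sum_eq_single i (fun j _ hji => ?_) (by simp)]
  · ring
  · rw [prod_eq_zero (mem_erase.mpr ⟨hji.symm, mem_univ i⟩) (sub_self _), mul_zero]

theorem monic_X_sub_C_mul_prod (b : K) (a : Fin m → K) :
    ((X - C b) * ∏ i, (X - C (a i))).Monic :=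
  (monic_X_sub_C b).mul (monic_prod_of_monic _ _ fun i _ => monic_X_sub_C (a i))

theorem natDegree_X_sub_C_mul_prod (b : K) (a : Fin m → K) :
    ((X - C b) * ∏ i, (X - C (a i))).natDegree = m + 1 := by
  rw [(monic_X_sub_C b).natDegree_mul (monic_prod_of_monic _ _ fun i _ => monic_X_sub_C (a i)),
    natDegree_prod_of_monic _ _ fun i _ => monic_X_sub_C (a i)]
  simp [add_comm]

theorem natDegree_X_mul_sum_lt (b : K) (a c : Fin m → K) :
    (X * ∑ i, C (c i) * ∏ i' ∈ univ.erase i, (X - C (a i'))).natDegree <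
      ((X - C b) * ∏ i, (X - C (a i))).natDegree := by
  rw [natDegree_X_sub_C_mul_prod, Nat.lt_succ_iff, mul_sum]
  refine natDegree_sum_le_of_forall_le _ _ fun i _ => natDegree_mul_le.trans ?_
  grw [natDegree_X_le, natDegree_C_mul_le,
    natDegree_prod_of_monic _ _ fun i' _ => monic_X_sub_C (a i')]
  simp only [natDegree_X_sub_C, sum_const, smul_eq_mul, mul_one, card_erase_of_mem (mem_univ i),
    card_univ, Fintype.card_fin]
  have := i.pos
  omega

theorem secularPoly_monic (b : K) (a c : Fin m → K) : (secularPoly b a c).Monic :=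
  (monic_X_sub_C_mul_prod b a).sub_of_left (degree_lt_degree (natDegree_X_mul_sum_lt b a c))

theorem natDegree_secularPoly (b : K) (a c : Fin m → K) :
    (secularPoly b a c).natDegree = m + 1 := by
  rw [secularPoly, natDegree_sub_eq_left_of_natDegree_lt (natDegree_X_mul_sum_lt b a c),
    natDegree_X_sub_C_mul_prod]

theorem secularPoly_eq_prod {a c : Fin m → K} {b : K} {y : Fin (m + 1) → K}
    (ha : Function.Injective a) (hy : ∀ k i, y k ≠ a i) (hy0 : secular a c (y 0) = b)
    (hres : ∀ i, a i * c i * ∏ i' ∈ univ.erase i, (a i - a i') = -∏ k, (a i - y k)) :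
    secularPoly b a c = ∏ k, (X - C (y k)) := by
  have hnodes : Function.Injective (Fin.cons (y 0) a : Fin (m + 1) → K) :=
    Fin.cons_injective_iff.mpr ⟨fun ⟨i, hi⟩ => hy 0 i hi.symm, ha⟩
  have hQ : (∏ k, (X - C (y k))).Monic := monic_prod_of_monic _ _ fun k _ => monic_X_sub_C (y k)
  refine eq_of_degree_sub_lt_of_eval_index_eq univ hnodes.injOn ?_ fun i _ => ?_
  · have hP := secularPoly_monic b a c
    have hdeg : (secularPoly b a c).natDegree = (∏ k, (X - C (y k))).natDegree := by
      rw [natDegree_secularPoly, natDegree_prod_of_monic _ _ fun k _ => monic_X_sub_C (y k)]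
      simp
    rw [card_univ, Fintype.card_fin]
    calc _ < (secularPoly b a c).degree :=
          degree_sub_lt_left
            (by rw [degree_eq_natDegree hP.ne_zero, degree_eq_natDegree hQ.ne_zero, hdeg])
            hP.ne_zero (hP.leadingCoeff.trans hQ.leadingCoeff.symm)
      _ = (m + 1 : ℕ) := by rw [degree_eq_natDegree hP.ne_zero, natDegree_secularPoly]
  · rw [eval_prod]
    induction i using Fin.cases with
    | zero =>
      rw [Fin.cons_zero, eval_secularPoly_eq_mul (hy 0), hy0, sub_self, mul_zero]
      exact (prod_eq_zero (mem_univ 0) (by simp)).symm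
    | succ i =>
      simp only [Fin.cons_succ, eval_secularPoly_node, hres, neg_neg, eval_sub, eval_X, eval_C]

theorem secular_eq_of_residues {a c : Fin m → K} {b : K} {y : Fin (m + 1) → K}
    (ha : Function.Injective a) (hy : ∀ k i, y k ≠ a i) (hy0 : secular a c (y 0) = b)
    (hres : ∀ i, a i * c i * ∏ i' ∈ univ.erase i, (a i - a i') = -∏ k, (a i - y k))
    (k : Fin (m + 1)) : secular a c (y k) = b := by
  have hk := congrArg (eval (y k)) (secularPoly_eq_prod ha hy hy0 hres)
  rw [eval_secularPoly_eq_mul (hy k), eval_prod, prod_eq_zero (mem_univ k) (by simp)] at hk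
  have hprod : ∏ i, (y k - a i) ≠ 0 := prod_ne_zero_iff.mpr fun i _ => sub_ne_zero.mpr (hy k i)
  exact sub_eq_zero.mp ((mul_eq_zero.mp hk).resolve_left hprod)

theorem secular_mul_sub_self {a : Fin m → K} {x : K} (hx : ∀ i, x ≠ a i) (r : Fin m → K) :
    secular a (fun i => r i * (a i - x)) x = x * (1 + ∑ i, r i) := by
  simp only [secular, mul_div_assoc, div_self (sub_ne_zero.mpr (hx _).symm), mul_one]

end Secular

section Interlacing

variable {K : Type*} {m : ℕ}

def Interlaces [LT K] (A : Fin m → K) (B : Fin (m + 1) → K) : Prop :=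
  ∀ j, B j.castSucc < A j ∧ A j < B j.succ

namespace Interlaces

variable [Preorder K] {A : Fin m → K} {B : Fin (m + 1) → K}

theorem strictMono_right (h : Interlaces A B) : StrictMono B :=
  Fin.strictMono_iff_lt_succ.mpr fun j => (h j).1.trans (h j).2

theorem strictMono_left (h : Interlaces A B) : StrictMono A := fun i j hij =>
  ((h i).2.trans_le (h.strictMono_right.monotone (Fin.succ_le_castSucc_iff.mpr hij))).trans (h j).1

theorem ne (h : Interlaces A B) (k : Fin (m + 1)) (i : Fin m) : B k ≠ A i := by
  rcases le_or_gt k i.castSucc with hk | hk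
  · exact ((h.strictMono_right.monotone hk).trans_lt (h i).1).ne
  · exact ((h i).2.trans_le (h.strictMono_right.monotone (Fin.castSucc_lt_iff_succ_le.mp hk))).ne'

theorem zero_lt (h : Interlaces A B) (i : Fin m) : B 0 < A i :=
  (h.strictMono_right.monotone (Fin.zero_le _)).trans_lt (h i).1

end Interlaces

end Interlacing

section GapWeight

variable {K : Type*} [Field K] {m : ℕ}

def gapWeight (A : Fin m → K) (B : Fin (m + 1) → K) (j : Fin m) : K :=
  (B j.succ - A j) / A j * ∏ i ∈ univ.erase j, (B i.succ - A j) / (A i - A j)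

theorem mul_gapWeight_mul_prod_erase {A : Fin m → K} (hA : Function.Injective A)
    (B : Fin (m + 1) → K) {i : Fin m} (hAi : A i ≠ 0) :
    A i * (gapWeight A B i * (A i - B 0)) * ∏ i' ∈ univ.erase i, (A i - A i') =
      -∏ k, (A i - B k) := by
  have herase : (∏ i' ∈ univ.erase i, (B i'.succ - A i) / (A i' - A i)) *
      ∏ i' ∈ univ.erase i, (A i - A i') = ∏ i' ∈ univ.erase i, (A i - B i'.succ) := by
    rw [← prod_mul_distrib]
    refine prod_congr rfl fun i' hi' => ?_
    have hne : A i' - A i ≠ 0 := sub_ne_zero.mpr (hA.ne (mem_erase.mp hi').1)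
    field_simp
    ring
  rw [Fin.prod_univ_succ, ← mul_prod_erase univ (fun i' => A i - B i'.succ) (mem_univ i),
    ← herase, gapWeight]
  field_simp
  ring

variable [LinearOrder K] [IsStrictOrderedRing K] {A : Fin m → K} {B : Fin (m + 1) → K}

theorem Interlaces.div_pos (h : Interlaces A B) {i j : Fin m} (hij : i ≠ j) :
    0 < (B i.succ - A j) / (A i - A j) := by
  rcases hij.lt_or_gt with hij | hij
  · have hB : B i.succ < A j :=
      (h.strictMono_right.monotone (Fin.succ_le_castSucc_iff.mpr hij)).trans_lt (h j).1
    exact div_pos_of_neg_of_neg (sub_neg.mpr hB) (sub_neg.mpr (h.strictMono_left hij))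
  · exact _root_.div_pos (sub_pos.mpr ((h.strictMono_left hij).trans (h i).2))
      (sub_pos.mpr (h.strictMono_left hij))

theorem Interlaces.gapWeight_mul_pos (h : Interlaces A B) {j : Fin m} (hA : A j ≠ 0) :
    0 < gapWeight A B j * A j := by
  rw [gapWeight, mul_right_comm, div_mul_cancel₀ _ hA]
  exact mul_pos (sub_pos.mpr (h j).2) (prod_pos fun i hi => h.div_pos (mem_erase.mp hi).1)

end GapWeight

/-- Theorem 2 of the paper: with interlacing numbers
`B̃₀ < Ã₁ < B̃₁ < ⋯ < Ã_m < B̃_m`, `Ãⱼ ≠ 0`, lengths `l₀,…,l_m > 0`, `N₁,…,N_m > 0`, and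
the explicit coupling constants
`α̃ⱼ = r̃ⱼ(Ãⱼ − B̃₀)l₀/Nⱼ`, `β̃ⱼ = √(Ãⱼ lⱼ/(r̃ⱼ(Ãⱼ − B̃₀)l₀))`, `γ̃ = B̃₀(1 + ∑ r̃ⱼ)l₀`,
one has `α̃ⱼ β̃ⱼ² Nⱼ/lⱼ = Ãⱼ` and each `B̃ⱼ` solves the gap-endpoint equation
`B̃ⱼ (l₀ + ∑ᵢ Ãᵢ lᵢ/(β̃ᵢ²(Ãᵢ − B̃ⱼ))) = γ̃`.  Here `A j` is `Ã_{j+1}`, `B j` is `B̃_j`,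
`l j` is `l_{j+1}`. -/
theorem prescribed_gap_endpoints
    (m : ℕ) (A : Fin m → ℝ) (B : Fin (m + 1) → ℝ)
    (hinter : ∀ j : Fin m, B j.castSucc < A j ∧ A j < B j.succ)
    (hA0 : ∀ j, A j ≠ 0)
    (l0 : ℝ) (hl0 : 0 < l0) (l : Fin m → ℝ) (hl : ∀ j, 0 < l j)
    (N : Fin m → ℝ) (hN : ∀ j, 0 < N j)
    (r : Fin m → ℝ)
    (hr : ∀ j, r j = (B j.succ - A j) / A j *
      ∏ i ∈ Finset.univ.erase j, (B i.succ - A j) / (A i - A j))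
    (α : Fin m → ℝ) (hα : ∀ j, α j = r j * (A j - B 0) * l0 / N j)
    (β : Fin m → ℝ) (hβ : ∀ j, β j = Real.sqrt (A j * l j / (r j * (A j - B 0) * l0)))
    (γ : ℝ) (hγ : γ = B 0 * (1 + ∑ j, r j) * l0) :
    (∀ j : Fin m, α j * (β j) ^ 2 * N j / l j = A j) ∧
    (∀ k : Fin (m + 1),
      B k * (l0 + ∑ i, A i * l i / ((β i) ^ 2 * (A i - B k))) = γ) := by
  have hI : Interlaces A B := hinter
  obtain rfl : r = gapWeight A B := funext hr
  set c : Fin m → ℝ := fun i => gapWeight A B i * (A i - B 0) with hc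
  have hcA : ∀ j, 0 < c j * A j := fun j => by
    rw [hc, mul_right_comm]
    exact mul_pos (hI.gapWeight_mul_pos (hA0 j)) (sub_pos.mpr (hI.zero_lt j))
  have hc0 : ∀ j, c j ≠ 0 := fun j => left_ne_zero_of_mul (hcA j).ne'
  have hβ2 : ∀ j, β j ^ 2 = A j * l j / (c j * l0) := fun j => by
    have hAc : 0 < A j / c j := by
      have := mul_pos_iff.mp (hcA j)
      rw [div_pos_iff]
      tauto
    rw [hβ j, Real.sq_sqrt (by rw [mul_div_mul_comm]; exact (mul_pos hAc (div_pos (hl j) hl0)).le)]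
  have hsec : ∀ k, secular A c (B k) = B 0 * (1 + ∑ j, gapWeight A B j) :=
    secular_eq_of_residues hI.strictMono_left.injective hI.ne
      (secular_mul_sub_self (hI.ne 0) _)
      fun i => mul_gapWeight_mul_prod_erase hI.strictMono_left.injective B (hA0 i)
  refine ⟨fun j => ?_, fun k => ?_⟩
  · rw [hα j, hβ2 j]
    field_simp [hc0 j, (hN j).ne', (hl j).ne', hl0.ne']
    ring
  · have hterm : ∀ i, A i * l i / (β i ^ 2 * (A i - B k)) = l0 * (c i / (A i - B k)) := by
      intro i
      rw [hβ2 i]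
      field_simp [hc0 i, (hl i).ne', hl0.ne', hA0 i, sub_ne_zero.mpr (hI.ne k i).symm]
    rw [sum_congr rfl fun i _ => hterm i, ← mul_sum, hγ, ← hsec k, secular]
    ring
end

section
/- Let m ∈ ℕ, α_1,...,α_m, β_1,...,β_m, γ ∈ ℝ with β_j ≠ 0, l_0,...,l_m > 0, N_1,...,N_m ∈ ℕ positive. Consider the (m+1)×(m+1) matrix H with entries H_{00} = γ l_0⁻¹ + Σ_{j=1}^m α_j N_j l_0⁻¹, H_{0j} = −α_j β_j N_j l_0⁻¹, H_{j0} = −α_j β_j N_j l_j⁻¹, H_{jj} = α_j β_j² N_j l_j⁻¹ for j = 1,...,m, and all other off-diagonal entries zero. Then λ ∉ {A_1,...,A_m} (with A_j := α_j β_j² N_j l_j⁻¹) is an eigenvalue of H if and only if λ is a root of the equation λ(l_0 + Σ_{j=1}^m A_j l_j/(β_j²(A_j − λ))) = γ. -/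
/-!
`H` is an arrowhead matrix: besides its diagonal, only its first row and first column are nonzero.
For `λ` off the diagonal entries `Aⱼ`, rows `1, …, m` of `H v = λ v` force
`v_{j+1} = H_{j+1,0} v₀ / (λ - Aⱼ)`, so an eigenvector has `v₀ ≠ 0`, and row `0` becomes the
secular equation `H₀₀ + ∑ⱼ H_{0,j+1} H_{j+1,0} / (λ - Aⱼ) = λ`; conversely this equation makes
`(1, H_{j+1,0} / (λ - Aⱼ))ⱼ` an eigenvector. Multiplied by `l₀`, the secular equation for the
given entries is the stated one.
-/

open Finset

namespace Matrix

section Arrowhead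

variable {R : Type*} {m : ℕ} {M : Matrix (Fin (m + 1)) (Fin (m + 1)) R} {d : R} {r c a : Fin m → R}

theorem mulVec_zero_of_arrowhead [NonUnitalNonAssocSemiring R] (h00 : M 0 0 = d)
    (h0j : ∀ j, M 0 j.succ = r j) (v : Fin (m + 1) → R) :
    (M *ᵥ v) 0 = d * v 0 + ∑ j, r j * v j.succ := by
  simp only [mulVec, dotProduct, Fin.sum_univ_succ, h00, h0j]

theorem mulVec_succ_of_arrowhead [NonUnitalNonAssocSemiring R] (hj0 : ∀ j, M j.succ 0 = c j)
    (hjj : ∀ j, M j.succ j.succ = a j) (hoff : ∀ j k : Fin m, j ≠ k → M j.succ k.succ = 0)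
    (v : Fin (m + 1) → R) (j : Fin m) :
    (M *ᵥ v) j.succ = c j * v 0 + a j * v j.succ := by
  rw [mulVec, dotProduct, Fin.sum_univ_succ, hj0,
    sum_eq_single j (fun k _ hk => by rw [hoff j k hk.symm, zero_mul]) (by simp), hjj]

variable [Field R] {lam : R}

theorem exists_eigenvector_iff_of_arrowhead (h00 : M 0 0 = d) (h0j : ∀ j, M 0 j.succ = r j)
    (hj0 : ∀ j, M j.succ 0 = c j) (hjj : ∀ j, M j.succ j.succ = a j)
    (hoff : ∀ j k : Fin m, j ≠ k → M j.succ k.succ = 0) (hlam : ∀ j, lam ≠ a j) :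
    (∃ v, v ≠ 0 ∧ M *ᵥ v = lam • v) ↔ d + ∑ j, r j * c j / (lam - a j) = lam := by
  have hgap : ∀ j, lam - a j ≠ 0 := fun j => sub_ne_zero.mpr (hlam j)
  have hrow0 := mulVec_zero_of_arrowhead h00 h0j
  have hrow := mulVec_succ_of_arrowhead hj0 hjj hoff
  constructor
  · rintro ⟨v, hv, hev⟩
    have htail : ∀ j, v j.succ = c j * v 0 / (lam - a j) := fun j => by
      have h := congrFun hev j.succ
      rw [hrow, Pi.smul_apply, smul_eq_mul] at h
      rw [eq_div_iff (hgap j)]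
      linear_combination -h
    have hv0 : v 0 ≠ 0 := fun h0 => hv <| funext <| Fin.cases h0 fun j => by simp [htail, h0]
    have h := congrFun hev 0
    rw [hrow0, Pi.smul_apply, smul_eq_mul] at h
    refine mul_right_cancel₀ hv0 ?_
    rw [add_mul, sum_mul, ← h]
    simp only [htail]
    congr 1
    exact sum_congr rfl fun j _ => by ring
  · intro heq
    refine ⟨Fin.cons 1 fun j => c j / (lam - a j), fun h => by simpa using congrFun h 0, ?_⟩
    funext i
    refine Fin.cases ?_ (fun j => ?_) i
    · rw [hrow0, Pi.smul_apply, smul_eq_mul]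
      simpa only [Fin.cons_zero, Fin.cons_succ, mul_one, mul_div_assoc] using heq
    · rw [hrow, Pi.smul_apply, smul_eq_mul]
      simp only [Fin.cons_zero, Fin.cons_succ]
      field_simp [hgap j]
      ring

end Arrowhead

end Matrix

theorem coupling_term_eq {K : Type*} [Field K] {a b n l l0 A lam : K} (hb : b ≠ 0) (hl : l ≠ 0)
    (hl0 : l0 ≠ 0) (hA : A = a * b ^ 2 * n / l) (hlam : lam ≠ A) :
    -(a * b * n) / l0 * (-(a * b * n) / l) / (lam - A)
      = -(a * n + lam * (A * l / (b ^ 2 * (A - lam)))) / l0 := by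
  have h1 : lam - A ≠ 0 := sub_ne_zero.mpr hlam
  have h2 : A - lam ≠ 0 := sub_ne_zero.mpr hlam.symm
  have habn : a * b * n = A * l / b := by rw [hA]; field_simp
  have han : a * n = A * l / b ^ 2 := by rw [hA]; field_simp
  rw [habn, han]
  field_simp
  ring

theorem matrix_eigenvalue_iff_root_general
    (m : ℕ) (α β : Fin m → ℝ) (hβ : ∀ j, β j ≠ 0) (γ : ℝ)
    (l0 : ℝ) (hl0 : 0 < l0) (l : Fin m → ℝ) (hl : ∀ j, 0 < l j)
    (N : Fin m → ℕ)
    (A : Fin m → ℝ) (hA : ∀ j, A j = α j * (β j) ^ 2 * (N j : ℝ) / l j)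
    (H : Matrix (Fin (m + 1)) (Fin (m + 1)) ℝ)
    (h00 : H 0 0 = (γ + ∑ j, α j * (N j : ℝ)) / l0)
    (h0j : ∀ j : Fin m, H 0 j.succ = -(α j * β j * (N j : ℝ)) / l0)
    (hj0 : ∀ j : Fin m, H j.succ 0 = -(α j * β j * (N j : ℝ)) / l j)
    (hjj : ∀ j : Fin m, H j.succ j.succ = α j * (β j) ^ 2 * (N j : ℝ) / l j)
    (hoff : ∀ j k : Fin m, j ≠ k → H j.succ k.succ = 0) :
    ∀ lam : ℝ, (∀ j, lam ≠ A j) →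
      ((∃ v : Fin (m + 1) → ℝ, v ≠ 0 ∧ H.mulVec v = lam • v) ↔
        lam * (l0 + ∑ j, A j * l j / ((β j) ^ 2 * (A j - lam))) = γ) := by
  intro lam hlam
  rw [Matrix.exists_eigenvector_iff_of_arrowhead h00 h0j hj0 (fun j => (hjj j).trans (hA j).symm)
    hoff hlam]
  simp only [coupling_term_eq (hβ _) (hl _).ne' hl0.ne' (hA _) (hlam _), ← sum_div,
    sum_neg_distrib, sum_add_distrib, ← add_div]
  rw [div_eq_iff hl0.ne', mul_add, mul_sum]
  constructor <;> intro h <;> linarith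

/-- characteristic equation for the matrix of the limiting operator `H₀^N`.
A number `λ ∉ {A₁,…,A_m}` (with `Aⱼ = αⱼ βⱼ² Nⱼ/lⱼ`) is an eigenvalue of the
`(m+1)×(m+1)` matrix `H` described below iff it is a root of
`λ (l₀ + ∑ⱼ Aⱼ lⱼ/(βⱼ²(Aⱼ − λ))) = γ`. -/
theorem matrix_eigenvalue_iff_root
    (m : ℕ) (α β : Fin m → ℝ) (hβ : ∀ j, β j ≠ 0) (γ : ℝ)
    (l0 : ℝ) (hl0 : 0 < l0) (l : Fin m → ℝ) (hl : ∀ j, 0 < l j)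
    (N : Fin m → ℕ) (hN : ∀ j, 0 < N j)
    (A : Fin m → ℝ) (hA : ∀ j, A j = α j * (β j) ^ 2 * (N j : ℝ) / l j)
    (H : Matrix (Fin (m + 1)) (Fin (m + 1)) ℝ)
    (h00 : H 0 0 = (γ + ∑ j, α j * (N j : ℝ)) / l0)
    (h0j : ∀ j : Fin m, H 0 j.succ = -(α j * β j * (N j : ℝ)) / l0)
    (hj0 : ∀ j : Fin m, H j.succ 0 = -(α j * β j * (N j : ℝ)) / l j)
    (hjj : ∀ j : Fin m, H j.succ j.succ = α j * (β j) ^ 2 * (N j : ℝ) / l j)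
    (hoff : ∀ j k : Fin m, j ≠ k → H j.succ k.succ = 0) :
    ∀ lam : ℝ, (∀ j, lam ≠ A j) →
      ((∃ v : Fin (m + 1) → ℝ, v ≠ 0 ∧ H.mulVec v = lam • v) ↔
        lam * (l0 + ∑ j, A j * l j / ((β j) ^ 2 * (A j - lam))) = γ) :=
  matrix_eigenvalue_iff_root_general m α β hβ γ l0 hl0 l hl N A hA H h00 h0j hj0 hjj hoff
end

section
/- Let m ∈ ℕ, and B̃_0 < Ã_1 < B̃_1 < ... < Ã_m < B̃_m real with Ã_j ≠ 0. With r̃_j = ((B̃_j − Ã_j)/Ã_j)·Π_{i≠j}((B̃_i − Ã_j)/(Ã_i − Ã_j)), the identity (B̃_k − B̃_0)·Σ_{i=1}^m (Ã_i/(Ã_i − B̃_k)) r̃_i = B̃_0 − B̃_k holds for every k ∈ {0, 1, ..., m} (for k = 0 both sides vanish). -/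
/-!
With `P(x) = ∏ₗ (x - B̃ₗ)` (over `l = 1, …, m`), the weights satisfy
`Ãᵢ r̃ᵢ = -P(Ãᵢ) / ∏_{l ≠ i} (Ãᵢ - Ãₗ)`. For `k ≥ 1`, dividing by `Ãᵢ - B̃ₖ` cancels the factor
`x - B̃ₖ` of `P`, so `∑ᵢ Ãᵢ r̃ᵢ / (Ãᵢ - B̃ₖ)` is minus the divided difference, at the `m` distinct
nodes `Ãᵢ`, of a monic polynomial of degree `m - 1`, which is its leading coefficient `1`.
-/

open Polynomial Finset Lagrange

section Interlacing

variable {α : Type*} [PartialOrder α] {m : ℕ} {A : Fin m → α} {B : Fin (m + 1) → α}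

theorem strictMono_of_interlace_right (hinter : ∀ j, B j.castSucc < A j ∧ A j < B j.succ) :
    StrictMono B :=
  Fin.strictMono_iff_lt_succ.mpr fun j => (hinter j).1.trans (hinter j).2

theorem strictMono_of_interlace_left (hinter : ∀ j, B j.castSucc < A j ∧ A j < B j.succ) :
    StrictMono A := fun i l hil =>
  calc A i < B i.succ := (hinter i).2
    _ ≤ B l.castSucc :=
      (strictMono_of_interlace_right hinter).monotone (Fin.succ_le_castSucc_iff.mpr hil)
    _ < A l := (hinter l).1

theorem ne_of_interlace (hinter : ∀ j, B j.castSucc < A j ∧ A j < B j.succ) (i : Fin m)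
    (k : Fin (m + 1)) : A i ≠ B k := by
  have hB := (strictMono_of_interlace_right hinter).monotone
  rcases le_or_gt k i.castSucc with hk | hk
  · exact ((hB hk).trans_lt (hinter i).1).ne'
  · exact ((hinter i).2.trans_le (hB (Fin.castSucc_lt_iff_succ_le.mp hk))).ne

end Interlacing

section DividedDifference

variable {F ι κ : Type*} [Field F] [DecidableEq ι]

theorem sum_eval_nodal_div_prod_sub_eq_one {s : Finset ι} {v : ι → F} (hvs : Set.InjOn v s)
    (t : Finset κ) (w : κ → F) (hts : #t + 1 = #s) :
    ∑ i ∈ s, (nodal t w).eval (v i) / ∏ j ∈ s.erase i, (v i - v j) = 1 := by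
  rw [← leadingCoeff_eq_sum hvs (by rw [degree_nodal, ← hts]; norm_cast),
    nodal_monic.leadingCoeff]

theorem mul_prod_erase_div_sub_eq (s : Finset ι) (a b : ι → F) {i : ι} (hi : i ∈ s) :
    (b i - a i) * ∏ l ∈ s.erase i, (b l - a i) / (a l - a i) =
      -(nodal s b).eval (a i) / ∏ l ∈ s.erase i, (a i - a l) := by
  have hflip : ∏ l ∈ s.erase i, (b l - a i) / (a l - a i) =
      ∏ l ∈ s.erase i, (a i - b l) / (a i - a l) :=
    prod_congr rfl fun l _ => by rw [← neg_div_neg_eq, neg_sub, neg_sub]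
  rw [hflip, prod_div_distrib, eval_nodal, ← mul_prod_erase s (fun l => a i - b l) hi]
  ring

theorem div_sub_mul_eq_neg_eval_nodal_erase_div (s : Finset ι) (a b : ι → F) {i j : ι}
    (hi : i ∈ s) (hj : j ∈ s) (hai : a i ≠ 0) (hij : a i ≠ b j) :
    a i / (a i - b j) * ((b i - a i) / a i * ∏ l ∈ s.erase i, (b l - a i) / (a l - a i)) =
      -((nodal (s.erase j) b).eval (a i) / ∏ l ∈ s.erase i, (a i - a l)) := by
  have hcore := mul_prod_erase_div_sub_eq s a b hi
  rw [nodal_eq_mul_nodal_erase hj, eval_mul] at hcore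
  simp only [eval_sub, eval_X, eval_C] at hcore
  have hij' : a i - b j ≠ 0 := sub_ne_zero.mpr hij
  calc a i / (a i - b j) * ((b i - a i) / a i * ∏ l ∈ s.erase i, (b l - a i) / (a l - a i))
      = (b i - a i) * (∏ l ∈ s.erase i, (b l - a i) / (a l - a i)) / (a i - b j) := by
        generalize ∏ l ∈ s.erase i, (b l - a i) / (a l - a i) = P
        field_simp
    _ = _ := by rw [hcore]; field_simp

end DividedDifference

/-- equation (3.4): with interlacing numbers `B̃₀ < Ã₁ < B̃₁ < ⋯ < Ã_m < B̃_m`,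
`Ãⱼ ≠ 0`, the vector `z = (r̃₁,…,r̃_m)` with
`r̃ⱼ = ((B̃ⱼ − Ãⱼ)/Ãⱼ)·∏_{i≠j} (B̃ᵢ − Ãⱼ)/(Ãᵢ − Ãⱼ)` satisfies the identity
`(B̃ₖ − B̃₀)·∑ᵢ (Ãᵢ/(Ãᵢ − B̃ₖ)) r̃ᵢ = B̃₀ − B̃ₖ` for every `k ∈ {0,…,m}` (for `k = 0` both sides vanish).  Here `A j` is `Ã_{j+1}`, `B j` is `B̃_j`. -/
theorem identity_for_all_Bk
    (m : ℕ) (A : Fin m → ℝ) (B : Fin (m + 1) → ℝ)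
    (hinter : ∀ j : Fin m, B j.castSucc < A j ∧ A j < B j.succ)
    (hA0 : ∀ j, A j ≠ 0)
    (r : Fin m → ℝ)
    (hr : ∀ j, r j = (B j.succ - A j) / A j *
      ∏ i ∈ Finset.univ.erase j, (B i.succ - A j) / (A i - A j)) :
    ∀ k : Fin (m + 1), (B k - B 0) * ∑ i, A i / (A i - B k) * r i = B 0 - B k := by
  intro k
  induction k using Fin.cases with
  | zero => simp
  | succ j =>
    have hterm : ∀ i, A i / (A i - B j.succ) * r i =
        -((nodal (univ.erase j) (fun l => B l.succ)).eval (A i) /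
          ∏ l ∈ univ.erase i, (A i - A l)) := fun i => by
      rw [hr i]
      exact div_sub_mul_eq_neg_eval_nodal_erase_div univ A (fun l => B l.succ) (mem_univ i)
        (mem_univ j) (hA0 i) (ne_of_interlace hinter i j.succ)
    have hsum : ∑ i, A i / (A i - B j.succ) * r i = -1 := by
      rw [sum_congr rfl fun i _ => hterm i, sum_neg_distrib,
        sum_eval_nodal_div_prod_sub_eq_one (strictMono_of_interlace_left hinter).injective.injOn]
      simp only [card_erase_of_mem (mem_univ j), card_univ, Fintype.card_fin]
      exact Nat.sub_add_cancel j.pos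
    rw [hsum]
    ring
end
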